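/- arXiv:quant-ph/0601117 — 7 statements merged into one kernel-verified Lean document; each statement's English description precedes it below -/
import Mathlib

section
/- Let n be an odd positive integer coprime to the prime power q. A splitting of n over F_q (a partition {S₀,S₁} of the nonzero residues mod n into unions of q-ary cyclotomic cosets with aS₀ = S₁, aS₁ = S₀ for some a coprime to n) exists if and only if q is a quadratic residue modulo n. -/
/-!
Colour each orbit of `⟨q, a⟩` on the nonzero residues by the parity of the exponent of `a`: a
splitting with multiplier `a` exists iff no `x ≠ 0` satisfies `q ^ i * a ^ j * x = x` with `j`
odd. A unit fixes some `x ≠ 0` iff it is `1` modulo some prime `p ∣ n`, and `n / d` is fixed by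
exactly the units that are `1` modulo `d`.

If `q` is a square, take `a` to be a non-residue modulo every prime `p ∣ n`; the quadratic
character modulo `p` then forces `j` to be even. Conversely, for each prime power `d ∥ n` the
group `(ℤ/d)ˣ` is cyclic, so if `q` were an odd power of a generator `g` and `a = g ^ l` then
`q ^ (-l) * a ^ k = 1` would be a relation with odd `k`. Hence `q` is a square modulo every
`d ∥ n`, and therefore modulo `n` by the Chinese remainder theorem.
-/

section Splitting

variable {G X : Type*}

def IsSplitting [SMul G X] (q a : G) (c : X → ZMod 2) : Prop :=
  ∀ x, c (q • x) = c x ∧ c (a • x) = c x + 1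

lemma apply_zpow_smul_eq_add_mul [Group G] [MulAction G X] {g : G} {c : X → ZMod 2}
    {t : ZMod 2} (h : ∀ x, c (g • x) = c x + t) (j : ℤ) (x : X) :
    c (g ^ j • x) = c x + j * t := by
  induction j using Int.induction_on generalizing x with
  | zero => simp
  | succ i ih => rw [zpow_add_one, mul_smul, ih, h]; push_cast; ring
  | pred i ih =>
    have hinv : c (g⁻¹ • x) = c x - t := by rw [eq_sub_iff_add_eq, ← h, smul_inv_smul]
    rw [zpow_sub_one, mul_smul, ih, hinv]; push_cast; ring

lemma image_smul_setOf_eq [Group G] [MulAction G X] {g : G} {c : X → ZMod 2} {t : ZMod 2}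
    (h : ∀ x, c (g • x) = c x + t) (s : ZMod 2) :
    (g • ·) '' {x | c x = s} = {x | c x = s + t} := by
  ext y
  refine ⟨?_, fun hy => ⟨g⁻¹ • y, ?_, smul_inv_smul g y⟩⟩
  · rintro ⟨x, rfl, rfl⟩
    exact h x
  · rw [Set.mem_ofPred_eq, ← add_right_cancel_iff (a := t), ← h, smul_inv_smul]
    exact hy

variable [CommGroup G] [MulAction G X] {q a : G}

lemma IsSplitting.even_of_smul_eq {c : X → ZMod 2} (hc : IsSplitting q a c) {x : X} {i j : ℤ}
    (hx : (q ^ i * a ^ j) • x = x) : Even j := by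
  have := congrArg c hx
  rw [mul_smul, apply_zpow_smul_eq_add_mul (c := c) (t := 0) (fun y => by rw [(hc y).1, add_zero]),
    apply_zpow_smul_eq_add_mul (c := c) (fun y => (hc y).2)] at this
  rw [← ZMod.intCast_eq_zero_iff_even]
  simpa using this

lemma exists_isSplitting (h : ∀ (x : X) (i j : ℤ), (q ^ i * a ^ j) • x = x → Even j) :
    ∃ c : X → ZMod 2, IsSplitting q a c := by
  set K := Subgroup.closure {q, a}
  let rep : X → X := fun x => (Quotient.mk (MulAction.orbitRel K X) x).out
  have rep_smul : ∀ g ∈ K, ∀ x, rep (g • x) = rep x := fun g hg x =>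
    congrArg Quotient.out <| Quotient.sound <|
      MulAction.orbitRel_apply.mpr (MulAction.mem_orbit x (⟨g, hg⟩ : K))
  have exists_smul_eq_rep : ∀ x, ∃ ij : ℤ × ℤ, (q ^ ij.1 * a ^ ij.2) • x = rep x := by
    intro x
    obtain ⟨⟨g, hg⟩, hgx⟩ :=
      MulAction.orbitRel_apply.mp (Quotient.mk_out (s := MulAction.orbitRel K X) x)
    obtain ⟨i, j, rfl⟩ := Subgroup.mem_closure_pair.mp hg
    exact ⟨(i, j), hgx⟩
  choose ij hij using exists_smul_eq_rep
  -- the colour of `x` is the parity of the `a`-exponent carrying it to its representative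
  have parity : ∀ (x : X) (i j i' j' : ℤ), (q ^ i * a ^ j) • x = (q ^ i' * a ^ j') • x →
      (j : ZMod 2) = j' := by
    intro x i j i' j' hx
    have hg : q ^ (i - i') * a ^ (j - j') = (q ^ i' * a ^ j')⁻¹ * (q ^ i * a ^ j) := by
      simp only [zpow_sub, mul_inv]; ac_rfl
    rw [← sub_eq_zero, ← Int.cast_sub, ZMod.intCast_eq_zero_iff_even]
    exact h x _ _ (by rw [hg, mul_smul, hx, inv_smul_smul])
  refine ⟨fun x => ((ij x).2 : ZMod 2), fun x => ⟨?_, ?_⟩⟩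
  · refine parity x ((ij (q • x)).1 + 1) _ (ij x).1 _ ?_
    rw [hij, ← rep_smul q (Subgroup.subset_closure (by simp)), ← hij, smul_smul, zpow_add_one]
    congr 1; ac_rfl
  · have := parity x _ _ (ij (a • x)).1 ((ij (a • x)).2 + 1) ((hij x).trans ?_)
    · show _ = ((ij x).2 : ZMod 2) + 1
      rw [this, Int.cast_add, Int.cast_one, add_assoc, show (1 : ZMod 2) + 1 = 0 from rfl,
        add_zero]
    rw [← rep_smul a (Subgroup.subset_closure (by simp)), ← hij, smul_smul, zpow_add_one]
    congr 1; ac_rfl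

end Splitting

section Partition

variable {R : Type*} [Semiring R] {q a : Rˣ} {S₀ S₁ : Set R}

lemma exists_isSplitting_of_partition (hdisj : S₀ ∩ S₁ = ∅) (hunion : S₀ ∪ S₁ = {x : R | x ≠ 0})
    (hq₁ : (fun x => (q : R) * x) '' S₁ = S₁) (ha₀ : (fun x => (a : R) * x) '' S₀ = S₁)
    (ha₁ : (fun x => (a : R) * x) '' S₁ = S₀) :
    ∃ c : {x : R // x ≠ 0} → ZMod 2, IsSplitting q a c := by
  have mem_image_iff (u : Rˣ) {S T : Set R} (h : (fun x => (u : R) * x) '' S = T) (x : R) :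
      (u : R) * x ∈ T ↔ x ∈ S :=
    h ▸ u.isUnit.mul_right_injective.mem_set_image
  have notMem_S₁_iff {y : R} (hy : y ≠ 0) : y ∉ S₁ ↔ y ∈ S₀ := by
    have : y ∈ S₀ ∨ y ∈ S₁ := (hunion ▸ hy : y ∈ S₀ ∪ S₁)
    have := fun h₀ h₁ => (hdisj ▸ Set.mem_inter h₀ h₁ : y ∈ (∅ : Set R))
    tauto
  refine ⟨fun x => S₁.indicator (fun _ => 1) (x : R), fun x => ⟨?_, ?_⟩⟩
  · simp only [Units.smul_coe, Units.smul_def, smul_eq_mul]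
    by_cases hx : (x : R) ∈ S₁
    · rw [Set.indicator_of_mem hx, Set.indicator_of_mem ((mem_image_iff q hq₁ x).mpr hx)]
    · rw [Set.indicator_of_notMem hx,
        Set.indicator_of_notMem (mt (mem_image_iff q hq₁ x).mp hx)]
  · have hax : (a : R) * x ≠ 0 := (Units.mul_right_eq_zero a).not.mpr x.2
    simp only [Units.smul_coe, Units.smul_def, smul_eq_mul]
    by_cases hx : (x : R) ∈ S₁
    · rw [Set.indicator_of_mem hx, Set.indicator_of_notMem
        ((notMem_S₁_iff hax).mpr ((mem_image_iff a ha₁ x).mpr hx))]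
      rfl
    · rw [Set.indicator_of_notMem hx, Set.indicator_of_mem
        ((mem_image_iff a ha₀ x).mpr ((notMem_S₁_iff x.2).mp hx)), zero_add]

lemma IsSplitting.partition {c : {x : R // x ≠ 0} → ZMod 2} (hc : IsSplitting q a c) :
    let S₀ := Subtype.val '' {x | c x = 0}
    let S₁ := Subtype.val '' {x | c x = 1}
    S₀ ∩ S₁ = ∅ ∧ S₀ ∪ S₁ = {x : R | x ≠ 0} ∧
      (fun x => (q : R) * x) '' S₀ = S₀ ∧ (fun x => (q : R) * x) '' S₁ = S₁ ∧
      (fun x => (a : R) * x) '' S₀ = S₁ ∧ (fun x => (a : R) * x) '' S₁ = S₀ := by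
  have image_mul (u : Rˣ) (s : ZMod 2) :
      (fun x => (u : R) * x) '' (Subtype.val '' {x | c x = s}) =
        Subtype.val '' ((u • ·) '' {x | c x = s}) := by
    rw [Set.image_image, Set.image_image]
    rfl
  refine ⟨?_, ?_, ?_, ?_, ?_, ?_⟩
  · rw [← Set.image_inter Subtype.val_injective, Set.image_eq_empty,
      Set.eq_empty_iff_forall_notMem]
    rintro x ⟨h₀, h₁⟩
    exact zero_ne_one (h₀.symm.trans h₁)
  · have : {x | c x = 0} ∪ {x | c x = 1} = Set.univ :=
      Set.eq_univ_of_forall fun x => (by decide : ∀ z : ZMod 2, z = 0 ∨ z = 1) (c x)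
    rw [← Set.image_union, this, Set.image_univ, Subtype.range_val_subtype]
  · rw [image_mul, image_smul_setOf_eq (t := 0) (fun x => by rw [(hc x).1, add_zero]), add_zero]
  · rw [image_mul, image_smul_setOf_eq (t := 0) (fun x => by rw [(hc x).1, add_zero]), add_zero]
  · rw [image_mul, image_smul_setOf_eq (fun x => (hc x).2), zero_add]
  · rw [image_mul, image_smul_setOf_eq (fun x => (hc x).2)]
    rfl

end Partition

lemma IsCyclic.isSquare_of_forall_even {G : Type*} [Group G] [IsCyclic G] {Q A : G}
    (h : ∀ i j : ℤ, Q ^ i * A ^ j = 1 → Even j) : IsSquare Q := by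
  obtain ⟨g, hg⟩ := IsCyclic.exists_generator (α := G)
  obtain ⟨k, rfl⟩ := Subgroup.mem_zpowers_iff.mp (hg Q)
  obtain ⟨l, rfl⟩ := Subgroup.mem_zpowers_iff.mp (hg A)
  obtain ⟨m, rfl⟩ : Even k :=
    h (-l) k (by rw [← zpow_mul, ← zpow_mul, ← zpow_add]; ring_nf; simp)
  exact ⟨g ^ m, zpow_add g m m⟩

lemma FiniteField.even_of_zpow_mul_zpow_eq_one {F : Type*} [Field F] [Fintype F] {Q A : Fˣ}
    (hQ : IsSquare (Q : F)) (hA : ¬IsSquare (A : F)) {i j : ℤ} (h : Q ^ i * A ^ j = 1) :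
    Even j := by
  classical
  set χ := (quadraticChar F).toUnitHom
  have hχQ : χ Q = 1 := Units.ext <| by
    rw [MulChar.coe_toUnitHom, Units.val_one, quadraticChar_one_iff_isSquare Q.ne_zero]
    exact hQ
  have hχA : χ A = -1 := Units.ext <| by
    rw [MulChar.coe_toUnitHom, Units.val_neg, Units.val_one,
      quadraticChar_neg_one_iff_not_isSquare]
    exact hA
  have := congrArg χ h
  rw [map_mul, map_zpow, map_zpow, hχQ, hχA, one_zpow, one_mul, map_one] at this
  exact (Int.negOnePow_eq_one_iff j).mp this

namespace ZMod

variable {n : ℕ}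

lemma mul_natCast_div_eq_zero [NeZero n] {d : ℕ} (hd : d ∣ n) {r : ZMod n}
    (hr : castHom hd (ZMod d) r = 0) : r * ((n / d : ℕ) : ZMod n) = 0 := by
  rw [castHom_apply, cast_eq_val, natCast_eq_zero_iff] at hr
  obtain ⟨t, ht⟩ := hr
  rw [← natCast_zmod_val r, ← Nat.cast_mul, ht, mul_right_comm, Nat.mul_div_cancel' hd,
    Nat.cast_mul, natCast_self, zero_mul]

lemma natCast_div_ne_zero [NeZero n] {d : ℕ} (hd : d ∣ n) (h1 : 1 < d) :
    ((n / d : ℕ) : ZMod n) ≠ 0 := by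
  have hn := Nat.pos_of_ne_zero (NeZero.ne n)
  rw [Ne, natCast_eq_zero_iff]
  exact Nat.not_dvd_of_pos_of_lt (Nat.div_pos (Nat.le_of_dvd hn hd) (by omega))
    (Nat.div_lt_self hn h1)

lemma exists_prime_castHom_eq_zero_of_mul_eq_zero [NeZero n] {r x : ZMod n} (hx : x ≠ 0)
    (h : r * x = 0) : ∃ p, p.Prime ∧ ∃ hpn : p ∣ n, castHom hpn (ZMod p) r = 0 := by
  have hr : ¬IsUnit r := fun hu => hx (hu.mul_right_eq_zero.mp h)
  rw [← natCast_zmod_val r, isUnit_iff_coprime, Nat.Prime.not_coprime_iff_dvd] at hr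
  obtain ⟨p, hp, hpr, hpn⟩ := hr
  refine ⟨p, hp, hpn, ?_⟩
  rwa [← natCast_zmod_val r, map_natCast, natCast_eq_zero_iff]

lemma unitsMap_eq_one_iff {d : ℕ} (hd : d ∣ n) (u : (ZMod n)ˣ) :
    unitsMap hd u = 1 ↔ castHom hd (ZMod d) ((u : ZMod n) - 1) = 0 := by
  rw [map_sub, map_one, sub_eq_zero, ← Units.val_inj, unitsMap_val, castHom_apply, Units.val_one]

lemma equivPi_apply (hn : n ≠ 0) (x : ZMod n) (p : n.primeFactors) :
    equivPi n hn x p = castHom (Nat.ordProj_dvd n p) _ x :=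
  RingHom.congr_fun (Subsingleton.elim ((Pi.evalRingHom _ p).comp (equivPi n hn).toRingHom) _) x

lemma isSquare_of_forall_primeFactors (hn : n ≠ 0) {x : ZMod n}
    (h : ∀ p ∈ n.primeFactors,
      IsSquare (castHom (Nat.ordProj_dvd n p) (ZMod (p ^ n.factorization p)) x)) :
    IsSquare x := by
  choose r hr using fun p : n.primeFactors => h p p.2
  refine ⟨(equivPi n hn).symm r, (equivPi n hn).injective ?_⟩
  ext p
  rw [map_mul, RingEquiv.apply_symm_apply, equivPi_apply, hr]
  rfl

lemma exists_unit_not_isSquare_unitsMap {p e : ℕ} [Fact p.Prime] (hp : p ≠ 2) (he : e ≠ 0) :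
    ∃ b : (ZMod (p ^ e))ˣ, ¬IsSquare (unitsMap (dvd_pow_self p he) b : ZMod p) := by
  obtain ⟨β, hβ⟩ := FiniteField.exists_nonsquare (F := ZMod p) (by rwa [ringChar_zmod_n])
  have hβ0 : β ≠ 0 := by rintro rfl; exact hβ IsSquare.zero
  have : NeZero (p ^ e) := ⟨pow_ne_zero _ (Fact.out : p.Prime).ne_zero⟩
  obtain ⟨b, hb⟩ := unitsMap_surjective (dvd_pow_self p he) (Units.mk0 β hβ0)
  exact ⟨b, by rwa [hb]⟩

lemma exists_unit_forall_not_isSquare_unitsMap (hn : Odd n) :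
    ∃ a : (ZMod n)ˣ, ∀ p, p.Prime → ∀ hpn : p ∣ n, ¬IsSquare (unitsMap hpn a : ZMod p) := by
  have hn0 : n ≠ 0 := hn.pos.ne'
  have he (p : n.primeFactors) : n.factorization p ≠ 0 := Finsupp.mem_support_iff.mp p.2
  have hb (p : n.primeFactors) : ∃ b : (ZMod (p ^ n.factorization p))ˣ,
      ¬IsSquare (unitsMap (dvd_pow_self _ (he p)) b : ZMod p) :=
    have := Fact.mk (Nat.prime_of_mem_primeFactors p.2)
    exists_unit_not_isSquare_unitsMap (hn.ne_two_of_dvd_nat (Nat.dvd_of_mem_primeFactors p.2))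
      (he p)
  choose b hb using hb
  refine ⟨Units.map (equivPi n hn0).symm.toMonoidHom (MulEquiv.piUnits.symm b), fun p hp hpn => ?_⟩
  lift p to n.primeFactors using Nat.mem_primeFactors.mpr ⟨hp, hpn, hn0⟩
  convert hb p using 2
  rw [unitsMap_val, unitsMap_val, ← castHom_apply (h := hpn),
    ← castHom_apply (h := dvd_pow_self _ (he p)),
    ← castHom_comp (dvd_pow_self _ (he p)) (Nat.ordProj_dvd n p), RingHom.comp_apply,
    ← equivPi_apply hn0]
  simp

lemma exists_isSplitting_of_isSquare (hn : Odd n) {Q : (ZMod n)ˣ} (hQ : IsSquare (Q : ZMod n)) :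
    ∃ a : (ZMod n)ˣ, ∃ c : {x : ZMod n // x ≠ 0} → ZMod 2, IsSplitting Q a c := by
  have : NeZero n := ⟨hn.pos.ne'⟩
  obtain ⟨a, ha⟩ := exists_unit_forall_not_isSquare_unitsMap hn
  refine ⟨a, exists_isSplitting fun x i j hx => ?_⟩
  have hfix : (((Q ^ i * a ^ j : (ZMod n)ˣ) : ZMod n) - 1) * x = 0 := by
    rw [sub_mul, one_mul, sub_eq_zero]
    exact congrArg Subtype.val hx
  obtain ⟨p, hp, hpn, hp0⟩ := exists_prime_castHom_eq_zero_of_mul_eq_zero x.2 hfix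
  have := Fact.mk hp
  refine FiniteField.even_of_zpow_mul_zpow_eq_one (Q := unitsMap hpn Q) (A := unitsMap hpn a)
    (hQ.map (castHom hpn (ZMod p))) (ha p hp hpn) (i := i) ?_
  rwa [← map_zpow, ← map_zpow, ← map_mul, unitsMap_eq_one_iff]

lemma isSquare_of_isSplitting (hn : Odd n) {Q a : (ZMod n)ˣ}
    {c : {x : ZMod n // x ≠ 0} → ZMod 2} (hc : IsSplitting Q a c) : IsSquare (Q : ZMod n) := by
  have : NeZero n := ⟨hn.pos.ne'⟩
  refine isSquare_of_forall_primeFactors hn.pos.ne' fun p hp => ?_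
  have hp' := Nat.prime_of_mem_primeFactors hp
  have hdn := Nat.ordProj_dvd n p
  have hd1 : 1 < p ^ n.factorization p :=
    Nat.one_lt_pow (Finsupp.mem_support_iff.mp hp) hp'.one_lt
  have := isCyclic_units_of_prime_pow p hp'
    (hn.ne_two_of_dvd_nat (Nat.dvd_of_mem_primeFactors hp)) (n.factorization p)
  obtain ⟨r, hr⟩ := IsCyclic.isSquare_of_forall_even (Q := unitsMap hdn Q) (A := unitsMap hdn a)
    fun i j hij => hc.even_of_smul_eq (x := ⟨_, natCast_div_ne_zero hdn hd1⟩) <| Subtype.ext <| by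
      rw [← map_zpow, ← map_zpow, ← map_mul, unitsMap_eq_one_iff] at hij
      have := mul_natCast_div_eq_zero hdn hij
      rwa [sub_mul, one_mul, sub_eq_zero] at this
  exact ⟨r, by rw [castHom_apply, ← unitsMap_val hdn, hr, Units.val_mul]⟩

end ZMod

theorem stmt_6_general (n q : ℕ) (hn : Odd n) (h : Nat.Coprime q n) :
    (∃ S₀ S₁ : Set (ZMod n), ∃ a : (ZMod n)ˣ,
      S₀ ∩ S₁ = ∅ ∧ S₀ ∪ S₁ = {x : ZMod n | x ≠ 0} ∧
      (fun x => (q : ZMod n) * x) '' S₀ = S₀ ∧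
      (fun x => (q : ZMod n) * x) '' S₁ = S₁ ∧
      (fun x => (a : ZMod n) * x) '' S₀ = S₁ ∧
      (fun x => (a : ZMod n) * x) '' S₁ = S₀)
    ↔ ∃ x : ZMod n, x ^ 2 = (q : ZMod n) := by
  rw [← ZMod.coe_unitOfCoprime q h]
  constructor
  · rintro ⟨S₀, S₁, a, hdisj, hunion, -, hq₁, ha₀, ha₁⟩
    obtain ⟨c, hc⟩ := exists_isSplitting_of_partition hdisj hunion hq₁ ha₀ ha₁
    obtain ⟨r, hr⟩ := ZMod.isSquare_of_isSplitting hn hc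
    exact ⟨r, by rw [sq, hr]⟩
  · rintro ⟨r, hr⟩
    obtain ⟨a, c, hc⟩ := ZMod.exists_isSplitting_of_isSquare hn ⟨r, by rw [← hr, sq]⟩
    exact ⟨_, _, a, hc.partition⟩

/-- A splitting of `n` over `F_q` (partition `{S₀,S₁}` of the nonzero residues mod `n`
into unions of `q`-ary cyclotomic cosets interchanged by multiplication by a unit `a`)
exists if and only if `q` is a quadratic residue modulo `n`. -/
theorem stmt_6 (n q : ℕ) (hn : Odd n) (hpos : 0 < n) (hq : IsPrimePow q)
    (h : Nat.Coprime q n) :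
    (∃ S₀ S₁ : Set (ZMod n), ∃ a : (ZMod n)ˣ,
      S₀ ∩ S₁ = ∅ ∧ S₀ ∪ S₁ = {x : ZMod n | x ≠ 0} ∧
      (fun x => (q : ZMod n) * x) '' S₀ = S₀ ∧
      (fun x => (q : ZMod n) * x) '' S₁ = S₁ ∧
      (fun x => (a : ZMod n) * x) '' S₀ = S₁ ∧
      (fun x => (a : ZMod n) * x) '' S₁ = S₀)
    ↔ ∃ x : ZMod n, x ^ 2 = (q : ZMod n) :=
  stmt_6_general n q hn h
end

section
/- Let {S₀, S₁, a} be a splitting of n over F_q, let Cᵢ be the even-like duadic code with defining set Sᵢ ∪ {0} and Dᵢ the odd-like duadic code with defining set Sᵢ. Then the Euclidean dual C₀^⊥ is the cyclic code with defining set -S₁ mod n; in particular C₀^⊥ = D₁μ₋₁, which is equivalent to D₁. Similarly D₀^⊥ = C₁μ₋₁ ~ C₁. -/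
/-- The cyclic code of length `n` over `F` with defining set `T ⊆ ℤ/nℤ`, relative to a
fixed primitive `n`-th root of unity `α` in an extension field `E` (embedding `f`). -/
def cyclicCode (n : ℕ) [NeZero n] {F E : Type*} [Field F] [Field E]
    (f : F →+* E) (α : E) (T : Set (ZMod n)) : Set (ZMod n → F) :=
  {c | ∀ j ∈ T, ∑ i : ZMod n, f (c i) * α ^ (j * i).val = 0}

/-- The Euclidean dual of a code `C ⊆ F^n`. -/
def euclDual (n : ℕ) [NeZero n] {F : Type*} [Field F] (C : Set (ZMod n → F)) :
    Set (ZMod n → F) :=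
  {u | ∀ c ∈ C, ∑ i : ZMod n, u i * c i = 0}

open Finset

set_option linter.unusedSectionVars false
set_option linter.unusedVariables false

section helpers
variable {n : ℕ} [NeZero n] {E : Type*} [Field E] {α : E}

lemma chi_nat (hα : orderOf α = n) (x : ℕ) : α ^ ((x : ZMod n)).val = α ^ x := by
  rw [ZMod.val_natCast, ← hα, pow_mod_orderOf]

lemma chi_eq (hα : orderOf α = n) {a : ZMod n} {x : ℕ} (h : ((x : ℕ) : ZMod n) = a) :
    α ^ a.val = α ^ x := by rw [← h, chi_nat hα]

lemma sum_chi (hα : orderOf α = n) (m : ZMod n) :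
    ∑ i : ZMod n, α ^ (m * i).val = if m = 0 then (n : E) else 0 := by
  split_ifs with h
  · subst h
    simp [ZMod.val_zero, Finset.card_univ, ZMod.card]
  · have hmv : m.val ≠ 0 := fun hh => h (by rwa [← ZMod.val_eq_zero])
    have hβ : α ^ m.val ≠ 1 := by
      intro h1
      have hdvd := orderOf_dvd_of_pow_eq_one h1
      rw [hα] at hdvd
      exact absurd (Nat.le_of_dvd (Nat.pos_of_ne_zero hmv) hdvd) (not_le.mpr (ZMod.val_lt m))
    have key : ∀ i : ZMod n, α ^ (m * i).val = (α ^ m.val) ^ i.val := by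
      intro i
      rw [← pow_mul]
      refine chi_eq hα ?_
      push_cast [ZMod.natCast_val, ZMod.cast_id]
      ring
    rw [Finset.sum_congr rfl (fun i _ => key i)]
    have reindex : ∑ i : ZMod n, (α ^ m.val) ^ i.val = ∑ k ∈ range n, (α ^ m.val) ^ k := by
      apply Finset.sum_nbij' (i := fun (a : ZMod n) => a.val) (j := fun k => (k : ZMod n))
      · intro a _; exact mem_range.mpr (ZMod.val_lt a)
      · intro k _; exact mem_univ _
      · intro a _; simp [ZMod.natCast_val, ZMod.cast_id]
      · intro k hk; exact ZMod.val_natCast_of_lt (mem_range.mp hk)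
      · intro a _; rfl
    rw [reindex, geom_sum_eq hβ]
    have hn1 : α ^ n = 1 := by rw [← hα]; exact pow_orderOf_eq_one α
    have : (α ^ m.val) ^ n = 1 := by
      rw [← pow_mul, mul_comm m.val n, pow_mul, hn1, one_pow]
    simp [this]

end helpers

section helpers2
variable {n : ℕ} [NeZero n] {E : Type*} [Field E] {α : E}

lemma cast_ne_zero_of_coprime {F : Type*} [Field F] [Fintype F] {q : ℕ}
    (hcard : Fintype.card F = q) (hco : Nat.Coprime n q) (f : F →+* E) : (n : E) ≠ 0 := by
  intro h
  set p := ringChar F with hpdef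
  haveI hp : Fact p.Prime := ⟨CharP.char_is_prime F p⟩
  haveI : CharP E p := charP_of_injective_ringHom f.injective p
  have hpn : p ∣ n := (CharP.cast_eq_zero_iff E p n).mp h
  obtain ⟨s, -, hqs⟩ := FiniteField.card F p
  have hpq : p ∣ q := by
    rw [← hcard, hqs]
    exact dvd_pow_self p s.ne_zero
  have : p ∣ 1 := hco ▸ Nat.dvd_gcd hpn hpq
  exact hp.out.one_lt.ne' (Nat.eq_one_of_dvd_one this)

end helpers2

section parseval
variable {n : ℕ} [NeZero n] {F E : Type*} [Field F] [Field E]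

lemma parseval (f : F →+* E) {α : E} (hα : orderOf α = n) (u c : ZMod n → F) :
    ∑ j : ZMod n, ((∑ i : ZMod n, f (u i) * α ^ (j * i).val) *
        (∑ i : ZMod n, f (c i) * α ^ ((-j) * i).val))
      = (n : E) * ∑ i : ZMod n, f (u i) * f (c i) := by
  have step1 : ∀ j : ZMod n,
      (∑ i : ZMod n, f (u i) * α ^ (j * i).val) *
        (∑ i : ZMod n, f (c i) * α ^ ((-j) * i).val)
      = ∑ i : ZMod n, ∑ k : ZMod n, f (u i) * f (c k) * α ^ ((i - k) * j).val := by
    intro j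
    rw [Finset.sum_mul_sum]
    refine Finset.sum_congr rfl fun i _ => Finset.sum_congr rfl fun k _ => ?_
    have : α ^ ((i - k) * j).val = α ^ (j * i).val * α ^ ((-j) * k).val := by
      rw [← pow_add]
      refine chi_eq hα ?_
      push_cast [ZMod.natCast_val, ZMod.cast_id]
      ring
    rw [this]; ring
  rw [Finset.sum_congr rfl fun j _ => step1 j, Finset.sum_comm]
  have step2 : ∀ i : ZMod n, ∑ j : ZMod n, ∑ k : ZMod n,
      f (u i) * f (c k) * α ^ ((i - k) * j).val
      = (n : E) * (f (u i) * f (c i)) := by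
    intro i
    rw [Finset.sum_comm]
    have inner : ∀ k : ZMod n, ∑ j : ZMod n, f (u i) * f (c k) * α ^ ((i - k) * j).val
        = f (u i) * f (c k) * (if i - k = 0 then (n : E) else 0) := by
      intro k
      rw [← Finset.mul_sum, sum_chi hα]
    rw [Finset.sum_congr rfl fun k _ => inner k]
    have h2 : ∀ k : ZMod n, (f (u i) * f (c k) * if i - k = 0 then (n : E) else 0)
        = if k = i then f (u i) * f (c i) * (n : E) else 0 := by
      intro k
      by_cases hk : k = i
      · subst hk; simp
      · have : ¬ (i - k = 0) := fun hh => hk (by rw [sub_eq_zero] at hh; exact hh.symm)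
        simp [hk, this]
    rw [Finset.sum_congr rfl fun k _ => h2 k, Finset.sum_ite_eq' Finset.univ i]
    simp [mul_comm]
  rw [Finset.sum_congr rfl fun i _ => step2 i, ← Finset.mul_sum]
end parseval

section finitefield
open Polynomial

lemma mem_range_of_pow_card {F E : Type*} [Field F] [Fintype F] [Field E]
    (f : F →+* E) {z : E} (hz : z ^ Fintype.card F = z) :
    z ∈ Set.range f := by
  classical
  by_contra hzr
  set q := Fintype.card F with hq
  have hq2 : 2 ≤ q := Fintype.one_lt_card
  set P : Polynomial E := Polynomial.X ^ q - Polynomial.X with hP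
  have hdeg : P.natDegree = q := by
    rw [hP, Polynomial.natDegree_sub_eq_left_of_natDegree_lt, Polynomial.natDegree_X_pow]
    rw [Polynomial.natDegree_X_pow, Polynomial.natDegree_X]; omega
  have hPne : P ≠ 0 := fun h => by simp [h] at hdeg; omega
  set Z : Finset E := insert z (Finset.univ.image f) with hZ
  have hsub : Z.val ⊆ P.roots := by
    intro x hx
    rw [Finset.mem_val] at hx
    rw [Polynomial.mem_roots hPne]
    rcases Finset.mem_insert.mp hx with rfl | hx
    · simp [hP, Polynomial.IsRoot, hz]
    · obtain ⟨y, -, rfl⟩ := Finset.mem_image.mp hx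
      have hy : (y : F) ^ q = y := FiniteField.pow_card y
      simp [hP, Polynomial.IsRoot, ← map_pow, hy]
  have hcardZ : Z.card = q + 1 := by
    rw [hZ, Finset.card_insert_of_notMem, Finset.card_image_of_injective _ f.injective,
      Finset.card_univ]
    intro hmem
    obtain ⟨y, -, rfl⟩ := Finset.mem_image.mp hmem
    exact hzr ⟨y, rfl⟩
  have := Polynomial.card_le_degree_of_subset_roots hsub
  omega

lemma exists_tr_ne_zero (K : Type*) [Field K] [Fintype K] {q d : ℕ} (hq : 2 ≤ q)
    (hd : 1 ≤ d) (hcard : Fintype.card K = q ^ d) :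
    ∃ w : K, ∑ t ∈ Finset.range d, w ^ q ^ t ≠ 0 := by
  by_contra hw
  push_neg at hw
  set Q : Polynomial K := ∑ t ∈ Finset.range d, Polynomial.X ^ q ^ t with hQ
  have hdeg : Q.natDegree ≤ q ^ (d - 1) := by
    apply Polynomial.natDegree_sum_le_of_forall_le
    intro t ht
    rw [Polynomial.natDegree_X_pow]
    exact Nat.pow_le_pow_right (by omega) (by have := Finset.mem_range.mp ht; omega)
  have hcoeff : Q.coeff (q ^ (d - 1)) = 1 := by
    rw [hQ, Polynomial.finset_sum_coeff]
    rw [Finset.sum_congr rfl (fun t _ => Polynomial.coeff_X_pow (q ^ t) (q ^ (d - 1)))]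
    have hconv : ∀ t ∈ Finset.range d,
        (if q ^ (d - 1) = q ^ t then (1 : K) else 0) = if t = d - 1 then 1 else 0 := by
      intro t _
      congr 1
      simp only [eq_iff_iff]
      constructor
      · intro h; exact (Nat.pow_right_injective hq h).symm
      · intro h; rw [h]
    rw [Finset.sum_congr rfl hconv, Finset.sum_ite_eq' (Finset.range d) (d - 1)]
    simp [Finset.mem_range]; omega
  have hQne : Q ≠ 0 := fun h => by simp [h] at hcoeff
  have hsub : (Finset.univ : Finset K).val ⊆ Q.roots := by
    intro x hx
    rw [Polynomial.mem_roots hQne]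
    simp only [Polynomial.IsRoot, hQ, Polynomial.eval_finset_sum, Polynomial.eval_pow,
      Polynomial.eval_X]
    exact hw x
  have hle := Polynomial.card_le_degree_of_subset_roots hsub
  rw [Finset.card_univ, hcard] at hle
  have : q ^ (d - 1) < q ^ d := Nat.pow_lt_pow_right hq (by omega)
  omega

end finitefield


theorem dual_cyclic (n q : ℕ) [NeZero n] {F E : Type*} [Field F] [Fintype F] [Field E]
    (hcard : Fintype.card F = q) (hco : Nat.Coprime n q)
    (f : F →+* E) (α : E) (hα : orderOf α = n)
    (T : Set (ZMod n)) (hTc : ∀ x : ZMod n, x ∉ T → (q : ZMod n) * x ∉ T) :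
    euclDual n (cyclicCode n f α T) = cyclicCode n f α ((fun s => -s) '' Tᶜ) := by
  have hnE : (n : E) ≠ 0 := cast_ne_zero_of_coprime hcard hco f
  apply Set.Subset.antisymm
  · -- hard direction
    intro u hu
    rintro j ⟨m, hm, rfl⟩
    show ∑ i : ZMod n, f (u i) * α ^ ((-m) * i).val = 0
    set z : E := ∑ i : ZMod n, f (u i) * α ^ ((-m) * i).val with hzdef
    -- characteristic setup
    letI : Algebra F E := f.toAlgebra
    set p := ringChar F with hpdef
    haveI hp : Fact p.Prime := ⟨CharP.char_is_prime F p⟩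
    haveI : CharP E p := charP_of_injective_ringHom f.injective p
    obtain ⟨s, -, hqs⟩ := FiniteField.card F p
    have hq : q = p ^ (s : ℕ) := by rw [← hcard, hqs]
    have hq2 : 2 ≤ q := hcard ▸ Fintype.one_lt_card
    have frob : ∀ (t : ℕ) {ι : Type} (A : Finset ι) (g : ι → E),
        (∑ i ∈ A, g i) ^ q ^ t = ∑ i ∈ A, g i ^ q ^ t := by
      intro t ι A g
      have hqt : q ^ t = p ^ (s * t) := by rw [hq, ← pow_mul]
      rw [hqt]
      have hmap := map_sum (iterateFrobenius E p (s * t)) g A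
      simp only [iterateFrobenius_def] at hmap
      exact hmap
    have ffix : ∀ (t : ℕ) (x : F), f x ^ q ^ t = f x := by
      intro t x
      have hx : x ^ q ^ t = x := by rw [← hcard]; exact FiniteField.pow_card_pow t x
      rw [← map_pow, hx]
    -- the field K = F(α)
    have hαn : α ^ n = 1 := by rw [← hα]; exact pow_orderOf_eq_one α
    have hint : IsIntegral F α := by
      refine ⟨Polynomial.X ^ n - 1, ?_, ?_⟩
      · simpa using Polynomial.monic_X_pow_sub_C (1 : F) (NeZero.ne n)
      · simp [hαn]
    set K := IntermediateField.adjoin F ({α} : Set E) with hK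
    haveI : FiniteDimensional F K := IntermediateField.adjoin.finiteDimensional hint
    haveI : Finite K := Module.finite_of_finite F
    letI : Fintype K := Fintype.ofFinite K
    set d := Module.finrank F K with hd
    have hd1 : 1 ≤ d := Module.finrank_pos
    have hcardK : Fintype.card K = q ^ d := by rw [← hcard]; exact Module.card_eq_pow_finrank
    have hαK : α ∈ K := IntermediateField.mem_adjoin_simple_self F α
    have hfK : ∀ x : F, f x ∈ K := fun x => K.algebraMap_mem x
    -- trace facts
    have hTr_mem : ∀ y : E, y ∈ K → (∑ t ∈ Finset.range d, y ^ q ^ t) ∈ Set.range f := by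
      intro y hy
      have hyd : y ^ q ^ d = y := by
        have : (⟨y, hy⟩ : K) ^ q ^ d = ⟨y, hy⟩ := by
          rw [← hcardK]; exact FiniteField.pow_card _
        exact congrArg Subtype.val this
      apply mem_range_of_pow_card f
      rw [hcard]
      have e1 : (∑ t ∈ Finset.range d, y ^ q ^ t) ^ q
          = ∑ t ∈ Finset.range d, y ^ q ^ (t + 1) := by
        have h1 := frob 1 (Finset.range d) (fun t => y ^ q ^ t)
        rw [pow_one] at h1
        rw [h1]
        refine Finset.sum_congr rfl fun t _ => ?_
        rw [← pow_mul, ← pow_succ]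
      rw [e1]
      have h1 := Finset.sum_range_succ' (fun t => y ^ q ^ t) d
      have h2 := Finset.sum_range_succ (fun t => y ^ q ^ t) d
      have h3 := h1.symm.trans h2
      simp only [pow_zero, pow_one, hyd] at h3
      exact add_right_cancel h3
    -- the q-orbit of m avoids T
    have hm' : m ∉ T := hm
    have horb : ∀ t : ℕ, ((q : ZMod n)) ^ t * m ∉ T := by
      intro t
      induction t with
      | zero => simpa using hm'
      | succ t ih =>
          have h2 : (q : ZMod n) ^ (t + 1) * m = (q : ZMod n) * ((q : ZMod n) ^ t * m) := by
            ring
          rw [h2]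
          exact hTc _ ih
    -- main computation: for every β ∈ K, the trace of β·z vanishes
    have key : ∀ β : E, β ∈ K → ∑ t ∈ Finset.range d, (β * z) ^ q ^ t = 0 := by
      intro β hβ
      have hyK : ∀ i : ZMod n, β * α ^ ((-m) * i).val ∈ K := fun i =>
        mul_mem hβ (pow_mem hαK _)
      choose c hc using fun i => hTr_mem _ (hyK i)
      have hcmem : c ∈ cyclicCode n f α T := by
        intro j hj
        have expand : ∀ i : ZMod n, f (c i) * α ^ (j * i).val
            = ∑ t ∈ Finset.range d,
                β ^ q ^ t * α ^ ((j - (q : ZMod n) ^ t * m) * i).val := by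
          intro i
          rw [hc i, Finset.sum_mul]
          refine Finset.sum_congr rfl fun t _ => ?_
          calc (β * α ^ ((-m) * i).val) ^ q ^ t * α ^ (j * i).val
              = β ^ q ^ t * α ^ (((-m) * i).val * q ^ t + (j * i).val) := by
                rw [mul_pow, ← pow_mul, pow_add]; ring
            _ = β ^ q ^ t * α ^ ((j - (q : ZMod n) ^ t * m) * i).val := by
                congr 1
                refine (chi_eq hα ?_).symm
                push_cast [ZMod.natCast_val, ZMod.cast_id]
                ring
        rw [Finset.sum_congr rfl fun i _ => expand i, Finset.sum_comm]
        refine Finset.sum_eq_zero fun t _ => ?_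
        rw [← Finset.mul_sum, sum_chi hα]
        have hne : j - (q : ZMod n) ^ t * m ≠ 0 := by
          rw [sub_ne_zero]
          intro hjm
          exact horb t (hjm ▸ hj)
        simp [hne]
      have h0 : ∑ i : ZMod n, f (u i) * f (c i) = 0 := by
        have := hu c hcmem
        have h1 : f (∑ i : ZMod n, u i * c i) = 0 := by rw [this, map_zero]
        rw [map_sum] at h1
        simpa [map_mul] using h1
      rw [← h0]
      have e3 : ∀ i : ZMod n, f (u i) * f (c i)
          = ∑ t ∈ Finset.range d, β ^ q ^ t * (f (u i) * α ^ ((-m) * i).val) ^ q ^ t := by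
        intro i
        rw [hc i, Finset.mul_sum]
        refine Finset.sum_congr rfl fun t _ => ?_
        rw [mul_pow, mul_pow, ffix t (u i)]
        ring
      rw [Finset.sum_congr rfl fun i _ => e3 i, Finset.sum_comm]
      refine Finset.sum_congr rfl fun t _ => ?_
      rw [← Finset.mul_sum, ← frob t, ← hzdef, mul_pow]
    -- conclude z = 0 by nondegeneracy of the trace
    by_contra hzne
    have hzK : z ∈ K := by
      rw [hzdef]
      exact sum_mem fun i _ => mul_mem (hfK (u i)) (pow_mem hαK _)
    obtain ⟨w, hw⟩ := exists_tr_ne_zero K hq2 hd1 hcardK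
    have hβK : ((w : E) * z⁻¹) ∈ K := mul_mem w.2 (IntermediateField.inv_mem K hzK)
    have hkey := key _ hβK
    rw [mul_assoc, inv_mul_cancel₀ hzne, mul_one] at hkey
    have hcast : ((∑ t ∈ Finset.range d, w ^ q ^ t : K) : E)
        = ∑ t ∈ Finset.range d, (w : E) ^ q ^ t := by push_cast; rfl
    rw [← hcast] at hkey
    exact hw (by exact_mod_cast hkey)
  · -- easy direction
    intro u hu c hc
    have hsum : ∑ i : ZMod n, f (u i) * f (c i) = 0 := by
      have hpar := parseval f hα u c
      have hz : ∀ j : ZMod n, (∑ i : ZMod n, f (u i) * α ^ (j * i).val) *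
          (∑ i : ZMod n, f (c i) * α ^ ((-j) * i).val) = 0 := by
        intro j
        by_cases hj : -j ∈ T
        · rw [hc (-j) hj, mul_zero]
        · have hmem : j ∈ (fun s => -s) '' Tᶜ := ⟨-j, hj, by simp⟩
          rw [hu j hmem, zero_mul]
      rw [Finset.sum_congr rfl fun j _ => hz j, Finset.sum_const_zero] at hpar
      rcases mul_eq_zero.mp hpar.symm with h | h
      · exact absurd h hnE
      · exact h
    have h1 : f (∑ i : ZMod n, u i * c i) = 0 := by
      rw [map_sum]; simpa [map_mul] using hsum
    exact f.injective (h1.trans (map_zero f).symm)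

lemma neg_sum {E : Type*} [AddCommMonoid E] {n : ℕ} [NeZero n] (g : ZMod n → E) :
    ∑ i : ZMod n, g (-i) = ∑ i : ZMod n, g i :=
  Fintype.sum_equiv (Equiv.neg (ZMod n)) _ _ (fun _ => rfl)

lemma mu_sum {n : ℕ} [NeZero n] {F E : Type*} [Field F] [Field E]
    (f : F →+* E) (α : E) (c : ZMod n → F) (j : ZMod n) :
    ∑ i : ZMod n, f (c (-i)) * α ^ (j * i).val
      = ∑ i : ZMod n, f (c i) * α ^ ((-j) * i).val := by
  rw [← neg_sum (fun i => f (c i) * α ^ ((-j) * i).val)]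
  refine Finset.sum_congr rfl fun i _ => ?_
  simp [neg_mul_neg]

lemma mu_image {n : ℕ} [NeZero n] {F E : Type*} [Field F] [Field E]
    (f : F →+* E) {α : E} (hα : orderOf α = n) (T : Set (ZMod n)) :
    cyclicCode n f α ((fun s => -s) '' T) =
      (fun (c : ZMod n → F) => fun i => c (-i)) '' cyclicCode n f α T := by
  ext c
  constructor
  · intro hc
    refine ⟨fun i => c (-i), ?_, by funext i; simp⟩
    intro j hj
    have h := hc (-j) ⟨j, hj, rfl⟩
    rw [mu_sum]
    exact h
  · rintro ⟨c', hc', rfl⟩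
    rintro j ⟨j₀, hj₀, rfl⟩
    show ∑ i : ZMod n, f (c' (-i)) * α ^ ((-j₀) * i).val = 0
    rw [mu_sum, neg_neg]
    exact hc' j₀ hj₀


/-- Let `{S₀, S₁, a}` be a splitting of `n` over `F_q`, with even-like duadic codes
`Cᵢ` (defining set `Sᵢ ∪ {0}`) and odd-like duadic codes `Dᵢ` (defining set `Sᵢ`).
Then `C₀^⊥` is the cyclic code with defining set `-S₁`, and `C₀^⊥ = D₁ μ₋₁`
(so `C₀^⊥ ~ D₁`); similarly `D₀^⊥` is the cyclic code with defining set `-(S₁ ∪ {0})`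
and `D₀^⊥ = C₁ μ₋₁ ~ C₁`. -/
theorem stmt_9 (n q : ℕ) [NeZero n] (hn : Odd n) {F E : Type*} [Field F] [Fintype F]
    [Field E] (hcard : Fintype.card F = q) (hco : Nat.Coprime n q)
    (f : F →+* E) (α : E) (hα : orderOf α = n)
    (S₀ S₁ : Set (ZMod n)) (a : (ZMod n)ˣ)
    (hdisj : S₀ ∩ S₁ = ∅)
    (hunion : S₀ ∪ S₁ = {x : ZMod n | x ≠ 0})
    (hc0 : (fun x => (q : ZMod n) * x) '' S₀ = S₀)
    (hc1 : (fun x => (q : ZMod n) * x) '' S₁ = S₁)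
    (ha0 : (fun x => (a : ZMod n) * x) '' S₀ = S₁)
    (ha1 : (fun x => (a : ZMod n) * x) '' S₁ = S₀) :
    euclDual n (cyclicCode n f α (S₀ ∪ {0})) = cyclicCode n f α ((fun s => -s) '' S₁) ∧
      euclDual n (cyclicCode n f α (S₀ ∪ {0})) =
        (fun (c : ZMod n → F) => fun i => c (-i)) '' cyclicCode n f α S₁ ∧
      euclDual n (cyclicCode n f α S₀) =
        cyclicCode n f α ((fun s => -s) '' (S₁ ∪ {0})) ∧
      euclDual n (cyclicCode n f α S₀) =
        (fun (c : ZMod n → F) => fun i => c (-i)) '' cyclicCode n f α (S₁ ∪ {0}) := by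

  have h0S1 : (0 : ZMod n) ∉ S₁ := fun h => by
    have h2 : (0 : ZMod n) ∈ S₀ ∪ S₁ := Or.inr h
    rw [hunion] at h2
    exact h2 rfl
  have h0S0 : (0 : ZMod n) ∉ S₀ := fun h => by
    have h2 : (0 : ZMod n) ∈ S₀ ∪ S₁ := Or.inl h
    rw [hunion] at h2
    exact h2 rfl
  have hdisj' : ∀ x : ZMod n, x ∈ S₀ → x ∉ S₁ := fun x h0 h1 => by
    have h2 : x ∈ S₀ ∩ S₁ := ⟨h0, h1⟩
    rw [hdisj] at h2
    exact h2
  have hS1 : ∀ x : ZMod n, x ∉ S₀ ∪ {0} → x ∈ S₁ := by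
    intro x hx
    have hx0 : x ≠ 0 := fun h => hx (Or.inr h)
    have h2 : x ∈ S₀ ∪ S₁ := by rw [hunion]; exact hx0
    rcases h2 with h | h
    · exact absurd (Or.inl h) hx
    · exact h
  have hcomp1 : (S₀ ∪ {0} : Set (ZMod n))ᶜ = S₁ := by
    ext x
    constructor
    · exact hS1 x
    · intro hx hmem
      rcases hmem with h | h
      · exact hdisj' x h hx
      · rw [Set.mem_singleton_iff] at h
        exact h0S1 (h ▸ hx)
  have hcomp2 : (S₀ : Set (ZMod n))ᶜ = S₁ ∪ {0} := by
    ext x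
    constructor
    · intro hx
      by_cases hx0 : x = 0
      · exact Or.inr hx0
      · exact Or.inl (hS1 x (fun h => by
          rcases h with h | h
          · exact hx h
          · exact hx0 (Set.mem_singleton_iff.mp h)))
    · rintro (h | h)
      · exact fun h0 => hdisj' x h0 h
      · rw [Set.mem_singleton_iff] at h
        exact fun h0 => h0S0 (h ▸ h0)
  have hTc1 : ∀ x : ZMod n, x ∉ S₀ ∪ {0} → (q : ZMod n) * x ∉ S₀ ∪ {0} := by
    intro x hx
    have hx1 : x ∈ S₁ := hS1 x hx
    have hqx : (q : ZMod n) * x ∈ S₁ := hc1 ▸ Set.mem_image_of_mem _ hx1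
    rintro (h | h)
    · exact hdisj' _ h hqx
    · rw [Set.mem_singleton_iff] at h
      exact h0S1 (h ▸ hqx)
  have hTc0 : ∀ x : ZMod n, x ∉ S₀ → (q : ZMod n) * x ∉ S₀ := by
    intro x hx
    by_cases hx0 : x = 0
    · rw [hx0, mul_zero]
      exact h0S0
    · have hx1 : x ∈ S₁ := hS1 x (fun h => by
        rcases h with h | h
        · exact hx h
        · exact hx0 (Set.mem_singleton_iff.mp h))
      have hqx : (q : ZMod n) * x ∈ S₁ := hc1 ▸ Set.mem_image_of_mem _ hx1
      exact fun h0 => hdisj' _ h0 hqx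
  have hd1 := dual_cyclic n q hcard hco f α hα (S₀ ∪ {0}) hTc1
  have hd0 := dual_cyclic n q hcard hco f α hα S₀ hTc0
  rw [hcomp1] at hd1
  rw [hcomp2] at hd0
  exact ⟨hd1, hd1.trans (mu_image f hα S₁), hd0, hd0.trans (mu_image f hα (S₁ ∪ {0}))⟩
end

section
/- Let {S₀, S₁, a} be a splitting of n over F_q with even-like duadic codes Cᵢ and odd-like duadic codes Dᵢ. Then Cᵢ ⊂ Dᵢ with codimension 1, and Cᵢ ⊆ Cᵢ^⊥ if and only if μ₋₁ interchanges S₀ and S₁ (i.e., -S₀ ≡ S₁ mod n). -/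
theorem pow_mod_congr {E : Type*} [Monoid E] (α : E) (n : ℕ) (hα1 : α ^ n = 1)
    {a b : ℕ} (h : a % n = b % n) : α ^ a = α ^ b := by
  conv_lhs => rw [← Nat.div_add_mod a n]
  conv_rhs => rw [← Nat.div_add_mod b n]
  rw [pow_add, pow_add, pow_mul, pow_mul, hα1, one_pow, one_pow, h]

theorem e_add (n : ℕ) [NeZero n] {E : Type*} [Monoid E] (α : E) (hα1 : α ^ n = 1)
    (a b : ZMod n) : α ^ (a+b).val = α ^ a.val * α ^ b.val := by
  rw [← pow_add]
  exact pow_mod_congr α n hα1 (by rw [ZMod.val_add]; simp [Nat.mod_mod_of_dvd])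

theorem e_mul (n : ℕ) [NeZero n] {E : Type*} [Monoid E] (α : E) (hα1 : α ^ n = 1)
    (a b : ZMod n) : α ^ (a * b).val = (α ^ a.val) ^ b.val := by
  rw [← pow_mul]
  exact pow_mod_congr α n hα1 (by rw [ZMod.val_mul]; simp [Nat.mod_mod_of_dvd])

theorem sum_val (n : ℕ) [NeZero n] {E : Type*} [AddCommMonoid E] (g : ℕ → E) :
    ∑ i : ZMod n, g i.val = ∑ j ∈ Finset.range n, g j := by
  refine Finset.sum_nbij' (i := fun i => i.val) (j := fun j => (j : ZMod n)) ?_ ?_ ?_ ?_ ?_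
  · intro i _; exact Finset.mem_range.mpr (ZMod.val_lt i)
  · intro j _; exact Finset.mem_univ _
  · intro i _; simp [ZMod.natCast_val, ZMod.cast_id]
  · intro j hj; exact ZMod.val_natCast_of_lt (Finset.mem_range.mp hj)
  · intro i _; rfl

-- DFT orthogonality

theorem dft_sum (n : ℕ) [NeZero n] {E : Type*} [Field E] (α : E) (hα : orderOf α = n)
    (m : ZMod n) : ∑ i : ZMod n, α ^ (m * i).val = if m = 0 then (n : E) else 0 := by
  have hα1 : α ^ n = 1 := by rw [← hα]; exact pow_orderOf_eq_one α
  by_cases hm : m = 0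
  · simp [hm, ZMod.val_zero, Finset.card_univ]
  · have hβ : α ^ m.val ≠ 1 := by
      intro h
      have h2 := orderOf_dvd_of_pow_eq_one h
      rw [hα] at h2
      have h3 : m.val = 0 := Nat.eq_zero_of_dvd_of_lt h2 (ZMod.val_lt m)
      exact hm ((ZMod.val_eq_zero m).mp h3)
    rw [if_neg hm]
    rw [Finset.sum_congr rfl (fun i _ => e_mul n α hα1 m i)]
    rw [sum_val n (fun j => (α ^ m.val) ^ j), geom_sum_eq hβ]
    rw [← pow_mul, mul_comm, pow_mul, hα1, one_pow, sub_self, zero_div]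

theorem char_facts (n : ℕ) [NeZero n] {F E : Type*} [Field F] [Fintype F] [Field E]
    (f : F →+* E) (hco : Nat.Coprime n (Fintype.card F)) :
    (n : F) ≠ 0 ∧ (n : E) ≠ 0 := by
  set p := ringChar F with hp
  haveI : CharP F p := ringChar.charP F
  obtain ⟨k, hpp, hcardF⟩ := FiniteField.card F p
  haveI : CharP E p := charP_of_injective_ringHom f.injective p
  have hpn : ¬ p ∣ n := by
    intro hdvd
    have hpq : p ∣ Fintype.card F := hcardF ▸ dvd_pow_self p k.ne_zero
    have h1 : p ∣ 1 := hco ▸ Nat.dvd_gcd hdvd hpq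
    exact hpp.one_lt.ne' (Nat.dvd_one.mp h1)
  constructor
  · intro h; exact hpn ((CharP.cast_eq_zero_iff F p n).mp h)
  · intro h; exact hpn ((CharP.cast_eq_zero_iff E p n).mp h)

open Polynomial in
theorem fixed_field (q : ℕ) {F E : Type*} [Field F] [Fintype F] [Field E]
    (hcard : Fintype.card F = q) (f : F →+* E) (x : E) (hx : x ^ q = x) :
    ∃ y : F, f y = x := by
  classical
  by_contra hcon
  push_neg at hcon
  have hq2 : 2 ≤ q := hcard ▸ Fintype.one_lt_card
  set P : E[X] := X ^ q - X with hP
  have hPdeg : P.natDegree = q := by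
    rw [hP]
    rw [natDegree_sub_eq_left_of_natDegree_lt]
    · exact natDegree_X_pow q
    · rw [natDegree_X_pow, natDegree_X]; omega
  have hPne : P ≠ 0 := by
    intro h
    have := hPdeg
    rw [h, natDegree_zero] at this
    omega
  have hroot : ∀ z : E, z ^ q = z → z ∈ P.roots.toFinset := by
    intro z hz
    rw [Multiset.mem_toFinset, mem_roots hPne]
    simp [hP, IsRoot, hz]
  set Fs : Finset E := insert x (Finset.univ.image f) with hFs
  have hsub : Fs ⊆ P.roots.toFinset := by
    intro z hz
    rw [hFs, Finset.mem_insert] at hz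
    rcases hz with rfl | hz
    · exact hroot z hx
    · obtain ⟨y, _, rfl⟩ := Finset.mem_image.mp hz
      apply hroot
      rw [← map_pow]
      congr 1
      rw [← hcard]
      exact FiniteField.pow_card y
  have hcard1 : Fs.card = q + 1 := by
    rw [hFs, Finset.card_insert_of_notMem (by
      intro h
      obtain ⟨y, _, hy⟩ := Finset.mem_image.mp h
      exact hcon y hy)]
    rw [Finset.card_image_of_injective _ f.injective, Finset.card_univ, hcard]
  have h1 : Fs.card ≤ P.roots.toFinset.card := Finset.card_le_card hsub
  have h2 : P.roots.toFinset.card ≤ P.natDegree := by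
    calc P.roots.toFinset.card ≤ Multiset.card P.roots := Multiset.toFinset_card_le _
    _ ≤ P.natDegree := P.card_roots' 
  omega

theorem const_mem (n : ℕ) [NeZero n] {F E : Type*} [Field F] [Field E]
    (f : F →+* E) (α : E) (hα : orderOf α = n)
    (S : Set (ZMod n)) (hS : (0 : ZMod n) ∉ S) (y : F) :
    (fun _ => y) ∈ cyclicCode n f α S := by
  intro j hj
  have hj0 : j ≠ 0 := fun h => hS (h ▸ hj)
  rw [← Finset.mul_sum, dft_sum n α hα, if_neg hj0, mul_zero]

theorem sub_mem' (n : ℕ) [NeZero n] {F E : Type*} [Field F] [Field E]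
    (f : F →+* E) (α : E) (T : Set (ZMod n)) {u v : ZMod n → F}
    (hu : u ∈ cyclicCode n f α T) (hv : v ∈ cyclicCode n f α T) :
    (fun i => u i - v i) ∈ cyclicCode n f α T := by
  intro j hj
  simp only [map_sub, sub_mul, Finset.sum_sub_distrib]
  rw [hu j hj, hv j hj, sub_zero]

theorem add_mem' (n : ℕ) [NeZero n] {F E : Type*} [Field F] [Field E]
    (f : F →+* E) (α : E) (T : Set (ZMod n)) {u v : ZMod n → F}
    (hu : u ∈ cyclicCode n f α T) (hv : v ∈ cyclicCode n f α T) :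
    (fun i => u i + v i) ∈ cyclicCode n f α T := by
  intro j hj
  simp only [map_add, add_mul, Finset.sum_add_distrib]
  rw [hu j hj, hv j hj, add_zero]

theorem smul_mem' (n : ℕ) [NeZero n] {F E : Type*} [Field F] [Field E]
    (f : F →+* E) (α : E) (T : Set (ZMod n)) {u : ZMod n → F} (y : F)
    (hu : u ∈ cyclicCode n f α T) :
    (fun i => y * u i) ∈ cyclicCode n f α T := by
  intro j hj
  simp only [map_mul, mul_assoc]
  rw [← Finset.mul_sum, hu j hj, mul_zero]

theorem memC_iff (n : ℕ) [NeZero n] {F E : Type*} [Field F] [Field E]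
    (f : F →+* E) (α : E) (S : Set (ZMod n)) (d : ZMod n → F) :
    d ∈ cyclicCode n f α (S ∪ {0}) ↔ d ∈ cyclicCode n f α S ∧ ∑ i : ZMod n, d i = 0 := by
  constructor
  · intro h
    refine ⟨fun j hj => h j (Or.inl hj), ?_⟩
    have h0 := h 0 (Or.inr rfl)
    simp only [zero_mul, ZMod.val_zero, pow_zero, mul_one] at h0
    rw [← map_sum] at h0
    exact f.injective (by rw [h0, map_zero])
  · intro ⟨h1, h2⟩ j hj
    rcases hj with hj | hj
    · exact h1 j hj
    · simp only [Set.mem_singleton_iff] at hj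
      subst hj
      simp only [zero_mul, ZMod.val_zero, pow_zero, mul_one]
      rw [← map_sum, h2, map_zero]

theorem card_step (n q : ℕ) [NeZero n] {F E : Type*} [Field F] [Fintype F] [Field E]
    (hcard : Fintype.card F = q) (hco : Nat.Coprime n q) (f : F →+* E) (α : E)
    (hα : orderOf α = n) (S : Set (ZMod n)) (hS : (0 : ZMod n) ∉ S) :
    Nat.card (cyclicCode n f α S) = q * Nat.card (cyclicCode n f α (S ∪ {0})) := by
  classical
  have hnF : (n : F) ≠ 0 := (char_facts n f (hcard ▸ hco)).1
  set D := cyclicCode n f α S with hD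
  set C := cyclicCode n f α (S ∪ {0}) with hC
  -- the equiv D ≃ F × C
  have key : ∀ d : ZMod n → F, d ∈ D →
      (fun i => d i - ((n : F)⁻¹ * ∑ k : ZMod n, d k) * 1) ∈ C := by
    intro d hd
    rw [hC, memC_iff]
    constructor
    · exact sub_mem' n f α S hd (smul_mem' n f α S _ (const_mem n f α hα S hS 1))
    · simp only [mul_one, Finset.sum_sub_distrib, Finset.sum_const, Finset.card_univ,
        nsmul_eq_mul]
      rw [ZMod.card n, ← mul_assoc, mul_inv_cancel₀ hnF, one_mul, sub_self]
  have key2 : ∀ (y : F) (c : ZMod n → F), c ∈ C → (fun i => c i + y * 1) ∈ D := by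
    intro y c hc
    exact add_mem' n f α S (fun j hj => ((memC_iff n f α S c).mp hc).1 j hj)
      (smul_mem' n f α S y (const_mem n f α hα S hS 1))
  have sumlem : ∀ (y : F) (c : ZMod n → F), (∑ k : ZMod n, c k = 0) →
      ∑ k : ZMod n, (c k + ((n : F)⁻¹ * y) * 1) = y := by
    intro y c hsum
    simp only [mul_one, Finset.sum_add_distrib, hsum, Finset.sum_const, Finset.card_univ,
      nsmul_eq_mul, ZMod.card, zero_add]
    rw [← mul_assoc, mul_inv_cancel₀ hnF, one_mul]
  let eqv : D ≃ F × C :=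
    { toFun := fun d => ⟨∑ k : ZMod n, d.1 k,
        ⟨fun i => d.1 i - ((n : F)⁻¹ * ∑ k : ZMod n, d.1 k) * 1, key d.1 d.2⟩⟩
      invFun := fun p => ⟨fun i => p.2.1 i + ((n:F)⁻¹ * p.1) * 1, key2 _ p.2.1 p.2.2⟩
      left_inv := by
        intro ⟨d, hd⟩
        ext i
        simp only [mul_one]
        ring
      right_inv := by
        intro ⟨y, c, hc⟩
        have hsum : ∑ k : ZMod n, c k = 0 := ((memC_iff n f α S c).mp hc).2
        have h1 := sumlem y c hsum
        apply Prod.ext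
        · exact h1
        · apply Subtype.ext
          funext i
          simp only []
          rw [h1]
          ring }
  rw [Nat.card_congr eqv, Nat.card_prod, Nat.card_eq_fintype_card, hcard]

theorem pairing (n : ℕ) [NeZero n] {F E : Type*} [Field F] [Field E]
    (f : F →+* E) (α : E) (hα : orderOf α = n) (u c : ZMod n → F) :
    ∑ j : ZMod n, (∑ i : ZMod n, f (u i) * α ^ (j*i).val) *
      (∑ i : ZMod n, f (c i) * α ^ ((-j)*i).val) = (n : E) * f (∑ i : ZMod n, u i * c i) := by
  have hα1 : α ^ n = 1 := by rw [← hα]; exact pow_orderOf_eq_one α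
  have e1 : ∀ j : ZMod n, (∑ i : ZMod n, f (u i) * α ^ (j*i).val) *
      (∑ i : ZMod n, f (c i) * α ^ ((-j)*i).val)
      = ∑ i : ZMod n, ∑ k : ZMod n, f (u i) * f (c k) * α ^ ((i-k)*j).val := by
    intro j
    rw [Finset.sum_mul_sum]
    apply Finset.sum_congr rfl; intro i _
    apply Finset.sum_congr rfl; intro k _
    rw [mul_mul_mul_comm, ← e_add n α hα1]
    congr 2
    ring
  rw [Finset.sum_congr rfl (fun j _ => e1 j), Finset.sum_comm]
  have e2 : ∀ i : ZMod n, ∑ j : ZMod n, ∑ k : ZMod n, f (u i) * f (c k) * α ^ ((i-k)*j).val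
      = f (u i) * f (c i) * (n : E) := by
    intro i
    rw [Finset.sum_comm]
    have e3 : ∀ k : ZMod n, ∑ j : ZMod n, f (u i) * f (c k) * α ^ ((i-k)*j).val
        = f (u i) * f (c k) * (if i - k = 0 then (n:E) else 0) := by
      intro k
      rw [← Finset.mul_sum, dft_sum n α hα]
    rw [Finset.sum_congr rfl (fun k _ => e3 k)]
    simp only [sub_eq_zero, mul_ite, mul_zero]
    rw [Finset.sum_ite_eq]
    simp
  rw [Finset.sum_congr rfl (fun i _ => e2 i)]
  rw [map_sum, Finset.mul_sum]
  apply Finset.sum_congr rfl; intro i _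
  rw [map_mul]; ring

theorem e_qmul (n q : ℕ) [NeZero n] {E : Type*} [Monoid E] (α : E) (hα1 : α ^ n = 1)
    (a : ZMod n) : (α ^ a.val) ^ q = α ^ (((q : ZMod n)) * a).val := by
  rw [← pow_mul]
  apply pow_mod_congr α n hα1
  rw [ZMod.val_mul, ZMod.val_natCast, Nat.mod_mod_of_dvd _ (dvd_refl n),
    Nat.mod_mul_mod, Nat.mul_comm]

theorem no_pair (n q : ℕ) [NeZero n] {F E : Type*} [Field F] [Fintype F] [Field E]
    (hcard : Fintype.card F = q) (hco : Nat.Coprime n q)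
    (f : F →+* E) (α : E) (hα : orderOf α = n)
    (S₀ S₁ : Set (ZMod n))
    (hdisj : S₀ ∩ S₁ = ∅)
    (hunion : S₀ ∪ S₁ = {x : ZMod n | x ≠ 0})
    (hc1 : (fun x => (q : ZMod n) * x) '' S₁ = S₁)
    (H : cyclicCode n f α (S₀ ∪ {0}) ⊆ euclDual n (cyclicCode n f α (S₀ ∪ {0})))
    (t : ZMod n) (ht1 : t ∈ S₁) (ht2 : -t ∈ S₁) : False := by
  classical
  have hα1 : α ^ n = 1 := by rw [← hα]; exact pow_orderOf_eq_one α
  obtain ⟨hnF, hnE⟩ := char_facts n f (hcard ▸ hco)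
  -- the symmetric part of S₁
  set Q : Finset (ZMod n) := Finset.univ.filter (fun x => x ∈ S₁ ∧ -x ∈ S₁) with hQ
  have hQmem : ∀ x : ZMod n, x ∈ Q ↔ (x ∈ S₁ ∧ -x ∈ S₁) := by
    intro x; simp [hQ]
  have hQt : t ∈ Q := (hQmem t).mpr ⟨ht1, ht2⟩
  have hQsymm : ∀ k ∈ Q, -k ∈ Q := by
    intro k hk
    obtain ⟨h1, h2⟩ := (hQmem k).mp hk
    exact (hQmem (-k)).mpr ⟨h2, by rwa [neg_neg]⟩
  have hS1q : ∀ x ∈ S₁, (q : ZMod n) * x ∈ S₁ := by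
    intro x hx
    rw [← hc1]; exact Set.mem_image_of_mem _ hx
  have hQq : ∀ k ∈ Q, (q : ZMod n) * k ∈ Q := by
    intro k hk
    obtain ⟨h1, h2⟩ := (hQmem k).mp hk
    exact (hQmem _).mpr ⟨hS1q k h1, by rw [← mul_neg]; exact hS1q _ h2⟩
  have hQ0 : (0 : ZMod n) ∉ Q := by
    intro h
    have h1 := ((hQmem 0).mp h).1
    have := hunion ▸ Set.mem_union_right S₀ h1
    exact this rfl
  have hQS0 : ∀ j ∈ S₀, -j ∉ Q := by
    intro j hj hQj
    have h2 := ((hQmem (-j)).mp hQj).2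
    rw [neg_neg] at h2
    have : j ∈ S₀ ∩ S₁ := ⟨hj, h2⟩
    rw [hdisj] at this
    exact this
  -- multiplication by q is injective
  have hqu : IsUnit (q : ZMod n) := by
    have : IsUnit (ZMod.unitOfCoprime q hco.symm : ZMod n) := Units.isUnit _
    rwa [ZMod.coe_unitOfCoprime] at this
  have hQimg : Q.image (fun k => (q : ZMod n) * k) = Q := by
    apply Finset.eq_of_subset_of_card_le
    · intro x hx
      obtain ⟨k, hk, rfl⟩ := Finset.mem_image.mp hx
      exact hQq k hk
    · rw [Finset.card_image_of_injective _ (fun a b hab => by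
        exact hqu.mul_left_cancel hab)]
  -- the basic sum
  set Sf : ZMod n → E := fun w => ∑ k ∈ Q, α ^ (k * w).val with hSf
  -- Frobenius-stability
  have hfrob : ∀ w : ZMod n, (Sf w) ^ q = Sf w := by
    intro w
    set p := ringChar F with hp
    haveI : CharP F p := ringChar.charP F
    obtain ⟨m, hpp, hq⟩ := FiniteField.card F p
    haveI : CharP E p := charP_of_injective_ringHom f.injective p
    haveI : ExpChar E p := ExpChar.prime hpp
    rw [hSf]
    simp only []
    rw [hcard] at hq
    rw [hq, sum_pow_char_pow]
    have : ∀ k ∈ Q, (α ^ (k * w).val) ^ p ^ (m : ℕ)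
        = α ^ (((q : ZMod n) * k) * w).val := by
      intro k hk
      rw [← hq, e_qmul n q α hα1, mul_assoc]
    rw [Finset.sum_congr rfl this]
    conv_rhs => rw [← hQimg]
    rw [Finset.sum_image (fun a _ b _ hab => hqu.mul_left_cancel hab)]
  -- existence of w with Sf w ≠ 0
  have hw : ∃ w : ZMod n, Sf w ≠ 0 := by
    by_contra hcon
    push_neg at hcon
    have h0 : ∑ w : ZMod n, α ^ ((-t) * w).val * Sf w = 0 := by
      simp [hcon]
    rw [hSf] at h0
    simp only [Finset.mul_sum] at h0
    rw [Finset.sum_comm] at h0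
    have hterm : ∀ k ∈ Q, ∑ w : ZMod n, α ^ ((-t) * w).val * α ^ (k * w).val
        = if k - t = 0 then (n : E) else 0 := by
      intro k _
      have : ∀ w : ZMod n, α ^ ((-t) * w).val * α ^ (k * w).val = α ^ ((k - t) * w).val := by
        intro w
        rw [← e_add n α hα1]
        congr 1
        ring
      rw [Finset.sum_congr rfl (fun w _ => this w), dft_sum n α hα]
    rw [Finset.sum_congr rfl hterm] at h0
    simp only [sub_eq_zero] at h0
    rw [Finset.sum_ite_eq' Q t (fun _ => (n : E))] at h0
    rw [if_pos hQt] at h0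
    exact hnE h0
  obtain ⟨w, hwne⟩ := hw
  -- the codewords
  have hchoose : ∀ v : ZMod n, ∃ y : F, f y = Sf v :=
    fun v => fixed_field q hcard f (Sf v) (hfrob v)
  set U : ZMod n → ZMod n → F := fun v i => Classical.choose (hchoose (v + i)) with hU
  have hUspec : ∀ v i : ZMod n, f (U v i) = Sf (v + i) :=
    fun v i => Classical.choose_spec (hchoose (v + i))
  -- transform of U v
  have htrans : ∀ v j : ZMod n, ∑ i : ZMod n, f (U v i) * α ^ (j * i).val
      = if -j ∈ Q then (n : E) * α ^ ((-j) * v).val else 0 := by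
    intro v j
    have expand : ∀ i : ZMod n, f (U v i) * α ^ (j * i).val
        = ∑ k ∈ Q, α ^ (k * v).val * α ^ ((k + j) * i).val := by
      intro i
      rw [hUspec, hSf]
      simp only []
      rw [Finset.sum_mul]
      apply Finset.sum_congr rfl
      intro k _
      have h1 : α ^ (k * (v + i)).val = α ^ (k * v).val * α ^ (k * i).val := by
        rw [← e_add n α hα1]; congr 1; ring
      have h2 : α ^ ((k + j) * i).val = α ^ (k * i).val * α ^ (j * i).val := by
        rw [← e_add n α hα1]; congr 1; ring
      rw [h1, h2]; ring
    rw [Finset.sum_congr rfl (fun i _ => expand i), Finset.sum_comm]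
    have hterm : ∀ k ∈ Q, ∑ i : ZMod n, α ^ (k * v).val * α ^ ((k + j) * i).val
        = α ^ (k * v).val * (if k + j = 0 then (n : E) else 0) := by
      intro k _
      rw [← Finset.mul_sum, dft_sum n α hα]
    rw [Finset.sum_congr rfl hterm]
    have hcond : ∀ k : ZMod n, (k + j = 0) ↔ (k = -j) := by
      intro k; constructor
      · intro h; linear_combination h
      · intro h; rw [h]; ring
    simp only [hcond, mul_ite, mul_zero]
    rw [Finset.sum_ite_eq' Q (-j) (fun k => α ^ (k * v).val * (n : E))]
    by_cases hjq : -j ∈ Q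
    · rw [if_pos hjq, if_pos hjq, mul_comm]
    · rw [if_neg hjq, if_neg hjq]
  -- membership
  have hmem : ∀ v : ZMod n, U v ∈ cyclicCode n f α (S₀ ∪ {0}) := by
    intro v j hj
    rw [htrans v j]
    rcases hj with hj | hj
    · rw [if_neg (hQS0 j hj)]
    · simp only [Set.mem_singleton_iff] at hj
      subst hj
      rw [if_neg (by rw [neg_zero]; exact hQ0)]
  -- the contradiction
  have hpair := H (hmem w) (U 0) (hmem 0)
  have hzero : f (∑ i : ZMod n, U w i * U 0 i) = 0 := by rw [hpair, map_zero]
  rw [map_sum] at hzero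
  have hformula : ∑ i : ZMod n, f (U w i * U 0 i) = (n : E) * Sf w := by
    have expand : ∀ i : ZMod n, f (U w i * U 0 i)
        = ∑ k ∈ Q, α ^ (k * w).val * (Sf (0 + i) * α ^ (k * i).val) := by
      intro i
      rw [map_mul, hUspec, hUspec]
      conv_lhs => rw [hSf]
      simp only []
      rw [Finset.sum_mul]
      apply Finset.sum_congr rfl
      intro k _
      have h1 : α ^ (k * (w + i)).val = α ^ (k * w).val * α ^ (k * i).val := by
        rw [← e_add n α hα1]; congr 1; ring
      rw [h1]; ring
    rw [Finset.sum_congr rfl (fun i _ => expand i), Finset.sum_comm]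
    have hterm : ∀ k ∈ Q, ∑ i : ZMod n, α ^ (k * w).val * (Sf (0 + i) * α ^ (k * i).val)
        = α ^ (k * w).val * (n : E) := by
      intro k hk
      have inner : ∑ i : ZMod n, Sf (0 + i) * α ^ (k * i).val = (n : E) := by
        have : ∀ i : ZMod n, Sf (0 + i) * α ^ (k * i).val = f (U 0 i) * α ^ (k * i).val := by
          intro i; rw [hUspec]
        rw [Finset.sum_congr rfl (fun i _ => this i), htrans 0 k, if_pos (hQsymm k hk)]
        rw [mul_zero, ZMod.val_zero, pow_zero, mul_one]
      rw [← Finset.mul_sum, inner]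
    rw [Finset.sum_congr rfl hterm, ← Finset.sum_mul, mul_comm]
  rw [hformula] at hzero
  rcases mul_eq_zero.mp hzero with h | h
  · exact hnE h
  · exact hwne h

theorem orth_of (n : ℕ) [NeZero n] {F E : Type*} [Field F] [Field E]
    (hnE : (n : E) ≠ 0) (f : F →+* E) (α : E) (hα : orderOf α = n)
    (S : Set (ZMod n)) (hcover : ∀ j : ZMod n, j ∈ S ∪ {0} ∨ -j ∈ S ∪ {0}) :
    cyclicCode n f α (S ∪ {0}) ⊆ euclDual n (cyclicCode n f α (S ∪ {0})) := by
  intro u hu c hc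
  have key := pairing n f α hα u c
  have hzero : ∑ j : ZMod n, (∑ i : ZMod n, f (u i) * α ^ (j*i).val) *
      (∑ i : ZMod n, f (c i) * α ^ ((-j)*i).val) = 0 := by
    apply Finset.sum_eq_zero
    intro j _
    rcases hcover j with h | h
    · rw [hu j h, zero_mul]
    · rw [hc (-j) h, mul_zero]
  rw [hzero] at key
  have := (mul_eq_zero.mp key.symm).resolve_left hnE
  exact f.injective (by rw [this, map_zero])

/-- For a splitting `{S₀, S₁, a}` of `n` over `F_q` with even-like duadic codes `Cᵢ`
and odd-like duadic codes `Dᵢ`: `Cᵢ ⊂ Dᵢ` with codimension `1`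
(i.e. `|Dᵢ| = q·|Cᵢ|`), and `Cᵢ ⊆ Cᵢ^⊥` (for `i = 0, 1`) if and only if `μ₋₁`
interchanges `S₀` and `S₁`, i.e. `-S₀ = S₁`. -/
theorem stmt_10 (n q : ℕ) [NeZero n] (hn : Odd n) {F E : Type*} [Field F] [Fintype F]
    [Field E] (hcard : Fintype.card F = q) (hco : Nat.Coprime n q)
    (f : F →+* E) (α : E) (hα : orderOf α = n)
    (S₀ S₁ : Set (ZMod n)) (a : (ZMod n)ˣ)
    (hdisj : S₀ ∩ S₁ = ∅)
    (hunion : S₀ ∪ S₁ = {x : ZMod n | x ≠ 0})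
    (hc0 : (fun x => (q : ZMod n) * x) '' S₀ = S₀)
    (hc1 : (fun x => (q : ZMod n) * x) '' S₁ = S₁)
    (ha0 : (fun x => (a : ZMod n) * x) '' S₀ = S₁)
    (ha1 : (fun x => (a : ZMod n) * x) '' S₁ = S₀) :
    cyclicCode n f α (S₀ ∪ {0}) ⊂ cyclicCode n f α S₀ ∧
      cyclicCode n f α (S₁ ∪ {0}) ⊂ cyclicCode n f α S₁ ∧
      Nat.card (cyclicCode n f α S₀) = q * Nat.card (cyclicCode n f α (S₀ ∪ {0})) ∧
      Nat.card (cyclicCode n f α S₁) = q * Nat.card (cyclicCode n f α (S₁ ∪ {0})) ∧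
      ((cyclicCode n f α (S₀ ∪ {0}) ⊆ euclDual n (cyclicCode n f α (S₀ ∪ {0})) ∧
          cyclicCode n f α (S₁ ∪ {0}) ⊆ euclDual n (cyclicCode n f α (S₁ ∪ {0}))) ↔
        (fun x => -x) '' S₀ = S₁) := by
  classical
  obtain ⟨hnF, hnE⟩ := char_facts n f (hcard ▸ hco)
  have h0S₀ : (0 : ZMod n) ∉ S₀ := by
    intro h
    have := hunion ▸ Set.mem_union_left S₁ h
    exact this rfl
  have h0S₁ : (0 : ZMod n) ∉ S₁ := by
    intro h
    have := hunion ▸ Set.mem_union_right S₀ h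
    exact this rfl
  have hmemS : ∀ x : ZMod n, x ≠ 0 → x ∈ S₀ ∨ x ∈ S₁ := by
    intro x hx
    have : x ∈ S₀ ∪ S₁ := by rw [hunion]; exact hx
    exact this
  have hne0 : ∀ (S : Set (ZMod n)), (0 : ZMod n) ∉ S → ∀ x ∈ S, x ≠ 0 := by
    intro S hS x hx h
    exact hS (h ▸ hx)
  have strict : ∀ (S : Set (ZMod n)), (0 : ZMod n) ∉ S →
      cyclicCode n f α (S ∪ {0}) ⊂ cyclicCode n f α S := by
    intro S hS
    rw [Set.ssubset_def]
    refine ⟨fun c hc j hj => hc j (Or.inl hj), fun hsub => ?_⟩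
    have h1 : (fun _ => (1 : F)) ∈ cyclicCode n f α S := const_mem n f α hα S hS 1
    have h2 := ((memC_iff n f α S _).mp (hsub h1)).2
    rw [Finset.sum_const, Finset.card_univ, ZMod.card, nsmul_eq_mul, mul_one] at h2
    exact hnF h2
  refine ⟨strict S₀ h0S₀, strict S₁ h0S₁,
    card_step n q hcard hco f α hα S₀ h0S₀, card_step n q hcard hco f α hα S₁ h0S₁, ?_⟩
  constructor
  · rintro ⟨H0, -⟩
    have hno1 : ∀ x : ZMod n, ¬(x ∈ S₁ ∧ -x ∈ S₁) := by
      rintro x ⟨h1, h2⟩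
      exact no_pair n q hcard hco f α hα S₀ S₁ hdisj hunion hc1 H0 x h1 h2
    have hno0 : ∀ x : ZMod n, ¬(x ∈ S₀ ∧ -x ∈ S₀) := by
      rintro x ⟨h1, h2⟩
      apply hno1 ((a : ZMod n) * x)
      constructor
      · rw [← ha0]; exact Set.mem_image_of_mem _ h1
      · rw [← mul_neg, ← ha0]; exact Set.mem_image_of_mem _ h2
    apply Set.eq_of_subset_of_subset
    · rintro y ⟨x, hx, rfl⟩
      have hxne : x ≠ 0 := hne0 S₀ h0S₀ x hx
      have hnegne : -x ≠ 0 := by simpa using hxne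
      rcases hmemS (-x) hnegne with h | h
      · exact absurd ⟨hx, h⟩ (hno0 x)
      · exact h
    · intro y hy
      have hyne : y ≠ 0 := hne0 S₁ h0S₁ y hy
      have hnegne : -y ≠ 0 := by simpa using hyne
      rcases hmemS (-y) hnegne with h | h
      · exact ⟨-y, h, by simp⟩
      · exact absurd ⟨h, by rwa [neg_neg]⟩ (hno1 (-y))
  · intro hneg
    have hneg' : ∀ x ∈ S₀, -x ∈ S₁ := by
      intro x hx
      rw [← hneg]; exact Set.mem_image_of_mem _ hx
    have hneg'' : ∀ y ∈ S₁, -y ∈ S₀ := by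
      intro y hy
      rw [← hneg] at hy
      obtain ⟨x, hx, rfl⟩ := hy
      rwa [neg_neg]
    constructor
    · apply orth_of n hnE f α hα S₀
      intro j
      by_cases hj : j = 0
      · exact Or.inl (Or.inr hj)
      · rcases hmemS j hj with h | h
        · exact Or.inl (Or.inl h)
        · exact Or.inr (Or.inl (hneg'' j h))
    · apply orth_of n hnE f α hα S₁
      intro j
      by_cases hj : j = 0
      · exact Or.inl (Or.inr hj)
      · rcases hmemS j hj with h | h
        · exact Or.inr (Or.inl (hneg' j h))
        · exact Or.inl (Or.inl h)
end

section
/- Let n be odd, q a prime power coprime to n, with ord_n(q) odd. Then μ₋₁ gives a splitting of n over F_q, i.e., there is a partition {S₀,S₁} of the nonzero residues mod n into unions of q-ary cyclotomic cosets with -S₀ ≡ S₁ (mod n). -/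
/-- If `n` is odd, `q` a prime power coprime to `n` with `ord_n(q)` odd, then `μ₋₁`
gives a splitting of `n` over `F_q`: a partition of the nonzero residues mod `n` into
unions of `q`-ary cyclotomic cosets with `-S₀ = S₁`. -/
theorem stmt_11 (n q : ℕ) (hn : Odd n) (hpos : 0 < n) (hq : IsPrimePow q)
    (h : Nat.Coprime q n)
    (hodd : Odd (orderOf (ZMod.unitOfCoprime q h : (ZMod n)ˣ))) :
    ∃ S₀ S₁ : Set (ZMod n),
      S₀ ∩ S₁ = ∅ ∧ S₀ ∪ S₁ = {x : ZMod n | x ≠ 0} ∧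
      (fun x => (q : ZMod n) * x) '' S₀ = S₀ ∧
      (fun x => (q : ZMod n) * x) '' S₁ = S₁ ∧
      (fun x => -x) '' S₀ = S₁ := by
  classical
  haveI : NeZero n := ⟨hpos.ne'⟩
  set u : (ZMod n)ˣ := ZMod.unitOfCoprime q h with hu
  set c : ZMod n := (q : ZMod n) with hc
  set d : ℕ := orderOf u with hd
  have hcu : (u : ZMod n) = c := ZMod.coe_unitOfCoprime q h
  have hcunit : IsUnit c := ⟨u, hcu⟩
  have hcd : c ^ d = 1 := by
    rw [← hcu, ← Units.val_pow_eq_pow_val, pow_orderOf_eq_one, Units.val_one]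
  have hdpos : 0 < d := orderOf_pos u
  have h2 : IsUnit (2 : ZMod n) := by
    have : ((2 : ℕ) : ZMod n) = (2 : ZMod n) := by norm_cast
    rw [← this, ZMod.isUnit_iff_coprime]
    exact Nat.coprime_two_left.mpr hn
  -- inverse trick: multiplying by c^(j*(d-1)) inverts multiplication by c^j
  have hinv : ∀ (j : ℕ) (x : ZMod n), c ^ (j * (d - 1)) * (c ^ j * x) = x := by
    intro j x
    rw [← mul_assoc, ← pow_add]
    have : j * (d - 1) + j = j * d := by
      nlinarith [Nat.sub_add_cancel hdpos]
    rw [this, mul_comm j d, pow_mul, hcd, one_pow, one_mul]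
  -- key lemma: no nonzero x satisfies c^j * x = -x
  have key : ∀ x : ZMod n, x ≠ 0 → ∀ j : ℕ, c ^ j * x ≠ -x := by
    intro x hx j hj
    have hk : ∀ k : ℕ, c ^ (j * k) * x = (-1 : ZMod n) ^ k * x := by
      intro k
      induction k with
      | zero => simp
      | succ k ih =>
        have h1 : c ^ (j * (k + 1)) * x = c ^ j * (c ^ (j * k) * x) := by
          rw [← mul_assoc, ← pow_add, Nat.mul_succ]; ring_nf
        rw [h1, ih, mul_left_comm, hj, pow_succ]
        ring
    have hkd := hk d
    rw [mul_comm j d, pow_mul, hcd, one_pow, one_mul, hodd.neg_one_pow] at hkd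
    have h2x : (2 : ZMod n) * x = 0 := by
      have hxx : x + x = 0 := by nth_rewrite 1 [hkd]; ring
      rw [two_mul, hxx]
    exact hx (h2.mul_right_eq_zero.mp h2x)
  -- the relation: same coset up to sign
  set r : ZMod n → ZMod n → Prop :=
    fun x y => (∃ j : ℕ, y = c ^ j * x) ∨ (∃ j : ℕ, y = -(c ^ j * x)) with hr
  have hequiv : Equivalence r := by
    constructor
    · intro x; exact Or.inl ⟨0, by simp⟩
    · rintro x y (⟨j, rfl⟩ | ⟨j, rfl⟩)
      · exact Or.inl ⟨j * (d - 1), (hinv j x).symm⟩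
      · refine Or.inr ⟨j * (d - 1), ?_⟩
        rw [mul_neg, hinv j x, neg_neg]
    · rintro x y z (⟨j, rfl⟩ | ⟨j, rfl⟩) (⟨k, hk⟩ | ⟨k, hk⟩)
      · exact Or.inl ⟨k + j, by rw [hk, ← mul_assoc, ← pow_add]⟩
      · exact Or.inr ⟨k + j, by rw [hk, ← mul_assoc, ← pow_add]⟩
      · exact Or.inr ⟨k + j, by rw [hk, mul_neg, ← mul_assoc, ← pow_add]⟩
      · exact Or.inl ⟨k + j, by rw [hk, mul_neg, neg_neg, ← mul_assoc, ← pow_add]⟩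
  set s : Setoid (ZMod n) := ⟨r, hequiv⟩ with hs
  set rep : ZMod n → ZMod n := fun x => (Quotient.mk s x).out with hrepdef
  have hrep : ∀ x, r (rep x) x := fun x => @Quotient.mk_out _ s x
  have hrepeq : ∀ x y, r x y → rep x = rep y := by
    intro x y hxy
    simp only [hrepdef]
    rw [Quotient.sound (s := s) hxy]
  have hne : ∀ x y, r x y → x ≠ 0 → y ≠ 0 := by
    rintro x y (⟨j, rfl⟩ | ⟨j, rfl⟩) hx
    · exact fun h0 => hx (((hcunit.pow j).mul_right_eq_zero).mp h0)
    · intro h0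
      rw [neg_eq_zero] at h0
      exact hx (((hcunit.pow j).mul_right_eq_zero).mp h0)
  set S₀ : Set (ZMod n) := {x | x ≠ 0 ∧ ∃ j : ℕ, x = c ^ j * rep x} with hS0
  set S₁ : Set (ZMod n) := {x | x ≠ 0 ∧ ∃ j : ℕ, x = -(c ^ j * rep x)} with hS1
  refine ⟨S₀, S₁, ?_, ?_, ?_, ?_, ?_⟩
  · -- disjoint
    ext x
    simp only [Set.mem_inter_iff, Set.mem_empty_iff_false, iff_false, not_and]
    rintro ⟨hx, j, hj⟩ ⟨-, k, hk⟩
    have hrx : rep x ≠ 0 := fun h0 => hx (by rw [hj, h0, mul_zero])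
    have heq : c ^ j * rep x = -(c ^ k * rep x) := hj.symm.trans hk
    have h3 : c ^ (k * (d - 1)) * (c ^ j * rep x)
        = c ^ (k * (d - 1)) * (-(c ^ k * rep x)) := by rw [heq]
    rw [mul_neg, hinv k (rep x), ← mul_assoc, ← pow_add] at h3
    exact key (rep x) hrx _ h3
  · -- union = nonzero
    ext x
    simp only [Set.mem_union, Set.mem_setOf_eq, hS0, hS1]
    constructor
    · rintro (⟨hx, -⟩ | ⟨hx, -⟩) <;> exact hx
    · intro hx
      rcases hrep x with ⟨j, hj⟩ | ⟨j, hj⟩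
      · exact Or.inl ⟨hx, j, hj⟩
      · exact Or.inr ⟨hx, j, hj⟩
  · -- q * S₀ = S₀
    ext x
    simp only [Set.mem_image]
    constructor
    · rintro ⟨y, ⟨hy, j, hj⟩, rfl⟩
      have hrxy : r y (c * y) := Or.inl ⟨1, by rw [pow_one]⟩
      have hreq : rep (c * y) = rep y := (hrepeq y (c * y) hrxy).symm
      refine ⟨hne y (c * y) hrxy hy, j + 1, ?_⟩
      rw [hreq, pow_succ]
      conv_lhs => rw [hj]
      ring
    · rintro ⟨hx, j, hj⟩
      have hrxy : r x (c ^ (d - 1) * x) := Or.inl ⟨d - 1, rfl⟩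
      have hreq : rep (c ^ (d - 1) * x) = rep x := (hrepeq x _ hrxy).symm
      refine ⟨c ^ (d - 1) * x, ⟨hne x _ hrxy hx, j + (d - 1), ?_⟩, ?_⟩
      · rw [hreq, pow_add]
        conv_lhs => rw [hj]
        ring
      · show c * (c ^ (d - 1) * x) = x
        rw [← mul_assoc, ← pow_succ', Nat.sub_add_cancel hdpos, hcd, one_mul]
  · -- q * S₁ = S₁
    ext x
    simp only [Set.mem_image]
    constructor
    · rintro ⟨y, ⟨hy, j, hj⟩, rfl⟩
      have hrxy : r y (c * y) := Or.inl ⟨1, by rw [pow_one]⟩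
      have hreq : rep (c * y) = rep y := (hrepeq y (c * y) hrxy).symm
      refine ⟨hne y (c * y) hrxy hy, j + 1, ?_⟩
      rw [hreq, pow_succ]
      conv_lhs => rw [hj]
      ring
    · rintro ⟨hx, j, hj⟩
      have hrxy : r x (c ^ (d - 1) * x) := Or.inl ⟨d - 1, rfl⟩
      have hreq : rep (c ^ (d - 1) * x) = rep x := (hrepeq x _ hrxy).symm
      refine ⟨c ^ (d - 1) * x, ⟨hne x _ hrxy hx, j + (d - 1), ?_⟩, ?_⟩
      · rw [hreq, pow_add]
        conv_lhs => rw [hj]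
        ring
      · show c * (c ^ (d - 1) * x) = x
        rw [← mul_assoc, ← pow_succ', Nat.sub_add_cancel hdpos, hcd, one_mul]
  · -- -S₀ = S₁
    ext x
    simp only [Set.mem_image]
    constructor
    · rintro ⟨y, ⟨hy, j, hj⟩, rfl⟩
      have hrxy : r y (-y) := Or.inr ⟨0, by simp⟩
      have hreq : rep (-y) = rep y := (hrepeq y (-y) hrxy).symm
      refine ⟨fun h0 => hy (by rwa [neg_eq_zero] at h0), j, ?_⟩
      rw [hreq]
      conv_lhs => rw [hj]
    · rintro ⟨hx, j, hj⟩
      have hrxy : r x (-x) := Or.inr ⟨0, by simp⟩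
      have hreq : rep (-x) = rep x := (hrepeq x (-x) hrxy).symm
      refine ⟨-x, ⟨fun h0 => hx (by rwa [neg_eq_zero] at h0), j, ?_⟩, by simp⟩
      rw [hreq]
      conv_lhs => rw [hj]
      ring
end

section
/- Square Root Bound, improved case: With notation as in the square root bound, if the splitting is given by μ₋₁ (i.e., -S₀ ≡ S₁ mod n), then the minimum odd-like weight d_o satisfies d_o² - d_o + 1 ≥ n. -/
/-- The minimum Hamming weight among odd-like codewords (those with `∑ᵢ cᵢ ≠ 0`) of the
cyclic code with defining set `T`. -/
noncomputable def minOddWeight (n : ℕ) [NeZero n] {F E : Type*} [Field F] [DecidableEq F]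
    [Field E] (f : F →+* E) (α : E) (T : Set (ZMod n)) : ℕ :=
  sInf {w | ∃ c ∈ cyclicCode n f α T, (∑ i : ZMod n, c i) ≠ 0 ∧ hammingNorm c = w}

section helpers

variable {n : ℕ} [NeZero n] {E : Type*} [Field E] {α : E}

private lemma sum_val_eq {M : Type*} [AddCommMonoid M] (g : ℕ → M) :
    ∑ i : ZMod n, g i.val = ∑ k ∈ Finset.range n, g k := by
  refine Finset.sum_nbij' (fun i => i.val) (fun k => (k : ZMod n)) ?_ ?_ ?_ ?_ ?_
  · intro i _; exact Finset.mem_range.mpr (ZMod.val_lt i)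
  · intro k _; exact Finset.mem_univ _
  · intro i _; exact ZMod.natCast_rightInverse i
  · intro k hk; exact ZMod.val_cast_of_lt (Finset.mem_range.mp hk)
  · intro i _; rfl

private lemma psi_add (hα : orderOf α = n) (x y : ZMod n) :
    α ^ (x + y).val = α ^ x.val * α ^ y.val := by
  rw [← pow_add, ZMod.val_add]
  have h : (x.val + y.val) % n = (x.val + y.val) % orderOf α := by rw [hα]
  rw [h]
  exact pow_mod_orderOf α _

private lemma psi_mul (hα : orderOf α = n) (x y : ZMod n) :
    α ^ (x * y).val = (α ^ x.val) ^ y.val := by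
  rw [← pow_mul, ZMod.val_mul]
  have h : x.val * y.val % n = x.val * y.val % orderOf α := by rw [hα]
  rw [h]
  exact pow_mod_orderOf α _

private lemma sum_psi (hα : orderOf α = n) {m : ZMod n} (hm : m ≠ 0) :
    ∑ i : ZMod n, α ^ (m * i).val = 0 := by
  have h1 : ∀ i : ZMod n, α ^ (m * i).val = (α ^ m.val) ^ i.val := fun i => psi_mul hα m i
  simp only [h1]
  rw [sum_val_eq (fun k => (α ^ m.val) ^ k)]
  have hne : α ^ m.val ≠ 1 := by
    intro h
    have hdvd := orderOf_dvd_of_pow_eq_one h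
    rw [hα] at hdvd
    have hlt := ZMod.val_lt m
    have h0 : m.val = 0 := Nat.eq_zero_of_dvd_of_lt hdvd hlt
    exact hm ((ZMod.val_eq_zero m).mp h0)
  have han : α ^ n = 1 := by rw [← hα]; exact pow_orderOf_eq_one α
  have hpow : (α ^ m.val) ^ n = 1 := by
    rw [← pow_mul, mul_comm, pow_mul, han, one_pow]
  rw [geom_sum_eq hne n, hpow, sub_self, zero_div]

end helpers

/-- Square Root Bound, improved case: for odd-like duadic codes `D₀, D₁` of length `n`
over `F_q` arising from a splitting `{S₀, S₁, a}` given by `μ₋₁` (i.e. `-S₀ = S₁`),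
the minimum odd-like weight `d_o` satisfies `d_o² - d_o + 1 ≥ n`. -/
theorem stmt_14 (n q : ℕ) [NeZero n] (hn : Odd n) {F E : Type*} [Field F] [Fintype F]
    [DecidableEq F] [Field E] (hcard : Fintype.card F = q) (hco : Nat.Coprime n q)
    (f : F →+* E) (α : E) (hα : orderOf α = n)
    (S₀ S₁ : Set (ZMod n)) (a : (ZMod n)ˣ)
    (hdisj : S₀ ∩ S₁ = ∅)
    (hunion : S₀ ∪ S₁ = {x : ZMod n | x ≠ 0})
    (hc0 : (fun x => (q : ZMod n) * x) '' S₀ = S₀)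
    (hc1 : (fun x => (q : ZMod n) * x) '' S₁ = S₁)
    (ha0 : (fun x => (a : ZMod n) * x) '' S₀ = S₁)
    (ha1 : (fun x => (a : ZMod n) * x) '' S₁ = S₀)
    (hneg : (fun x => -x) '' S₀ = S₁) :
    n ≤ (minOddWeight n f α S₀) ^ 2 - minOddWeight n f α S₀ + 1 := by
  classical
  have hprim : IsPrimitiveRoot α n := hα ▸ IsPrimitiveRoot.orderOf α
  have hnE : ((n : ℕ) : E) ≠ 0 := hprim.neZero'.out
  -- (n : F) ≠ 0
  have hnF : ((n : ℕ) : F) ≠ 0 := by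
    have hcop : IsCoprime (n : ℤ) (q : ℤ) := Int.isCoprime_iff_gcd_eq_one.mpr (by
      simpa [Int.gcd] using hco)
    obtain ⟨u, v, huv⟩ := hcop
    intro h
    have hqF : ((q : ℕ) : F) = 0 := by
      rw [← hcard]; exact FiniteField.cast_card_eq_zero F
    have := congrArg (fun z : ℤ => (z : F)) huv
    simp only [Int.cast_add, Int.cast_mul, Int.cast_natCast, Int.cast_one] at this
    rw [h, hqF, mul_zero, mul_zero, add_zero] at this
    exact zero_ne_one this
  have hS₀ne : ∀ j ∈ S₀, j ≠ (0 : ZMod n) := by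
    intro j hj
    have : j ∈ S₀ ∪ S₁ := Or.inl hj
    rw [hunion] at this
    exact this
  -- membership of j in S₁ gives -j ∈ S₀
  have hS₁neg : ∀ j ∈ S₁, -j ∈ S₀ := by
    intro j hj
    rw [← hneg] at hj
    obtain ⟨s, hs, hsj⟩ := hj
    simpa [← hsj] using hs
  -- the all-ones word shows the defining set of the sInf is nonempty
  have hWne : {w | ∃ c ∈ cyclicCode n f α S₀, (∑ i : ZMod n, c i) ≠ 0 ∧
      hammingNorm c = w}.Nonempty := by
    refine ⟨hammingNorm (fun _ : ZMod n => (1 : F)), (fun _ => 1), ?_, ?_, rfl⟩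
    · intro j hj
      simp only [map_one, one_mul]
      exact sum_psi hα (hS₀ne j hj)
    · simp only [Finset.sum_const, Finset.card_univ, ZMod.card, nsmul_eq_mul, mul_one]
      exact hnF
  set d := minOddWeight n f α S₀ with hd
  obtain ⟨c, hc, hodd, hcd⟩ := Nat.sInf_mem hWne
  set c' : ZMod n → F := fun i => c (-i) with hc'def
  set e : ZMod n → F := fun k => ∑ i : ZMod n, c i * c' (k - i) with hedef
  -- transform of c' is transform of c at -j
  have hTc' : ∀ j : ZMod n, (∑ i : ZMod n, f (c' i) * α ^ (j * i).val)
      = ∑ i : ZMod n, f (c i) * α ^ ((-j) * i).val := by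
    intro j
    refine Fintype.sum_equiv (Equiv.neg (ZMod n)) _ _ ?_
    intro x
    simp only [Equiv.neg_apply, hc'def]
    rw [neg_mul_neg]
  -- convolution theorem
  have hTe : ∀ j : ZMod n, (∑ k : ZMod n, f (e k) * α ^ (j * k).val)
      = (∑ i : ZMod n, f (c i) * α ^ (j * i).val) *
        (∑ i : ZMod n, f (c' i) * α ^ (j * i).val) := by
    intro j
    rw [Finset.sum_mul_sum]
    simp only [hedef, map_sum, map_mul, Finset.sum_mul]
    rw [Finset.sum_comm]
    refine Finset.sum_congr rfl fun i _ => ?_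
    refine (Fintype.sum_equiv (Equiv.addLeft i) _ _ ?_).symm
    intro l
    simp only [Equiv.coe_addLeft]
    have h1 : i + l - i = l := by ring
    have h2 : j * (i + l) = j * i + j * l := by ring
    rw [h1, h2, psi_add hα]
    ring
  -- the transform of e vanishes at all nonzero j
  have hTe0 : ∀ j : ZMod n, j ≠ 0 → (∑ k : ZMod n, f (e k) * α ^ (j * k).val) = 0 := by
    intro j hj
    have hj' : j ∈ S₀ ∪ S₁ := by rw [hunion]; exact hj
    rw [hTe j]
    rcases hj' with hj0 | hj1
    · rw [hc j hj0, zero_mul]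
    · rw [hTc' j, hc (-j) (hS₁neg j hj1), mul_zero]
  -- inversion: e is constant
  have hinv : ∀ k : ZMod n,
      (∑ j : ZMod n, (∑ i : ZMod n, f (e i) * α ^ (j * i).val) * α ^ ((-k) * j).val)
      = ((n : ℕ) : E) * f (e k) := by
    intro k
    have hterm : ∀ j : ZMod n, (∑ i : ZMod n, f (e i) * α ^ (j * i).val) * α ^ ((-k) * j).val
        = ∑ i : ZMod n, f (e i) * α ^ ((i - k) * j).val := by
      intro j
      rw [Finset.sum_mul]
      refine Finset.sum_congr rfl fun i _ => ?_
      have h2 : (i - k) * j = j * i + (-k) * j := by ring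
      rw [h2, psi_add hα, mul_assoc]
    simp only [hterm]
    rw [Finset.sum_comm]
    have hrow : ∀ i : ZMod n, (∑ j : ZMod n, f (e i) * α ^ ((i - k) * j).val)
        = f (e i) * ∑ j : ZMod n, α ^ ((i - k) * j).val := by
      intro i; rw [Finset.mul_sum]
    simp only [hrow]
    rw [Finset.sum_eq_single k]
    · rw [sub_self]
      simp only [zero_mul, ZMod.val_zero, pow_zero]
      rw [Finset.sum_const, Finset.card_univ, ZMod.card, nsmul_eq_mul, mul_one, mul_comm]
    · intro i _ hik
      rw [sum_psi hα (sub_ne_zero_of_ne hik), mul_zero]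
    · intro h; exact absurd (Finset.mem_univ k) h
  have hconst : ∀ k : ZMod n, e k = e 0 := by
    intro k
    have h1 := (hinv k).symm
    have h2 := (hinv 0).symm
    have hsum : ∀ k : ZMod n,
        (∑ j : ZMod n, (∑ i : ZMod n, f (e i) * α ^ (j * i).val) * α ^ ((-k) * j).val)
        = (∑ i : ZMod n, f (e i) * α ^ ((0 : ZMod n) * i).val) := by
      intro k'
      rw [Finset.sum_eq_single (0 : ZMod n)]
      · rw [mul_zero, ZMod.val_zero, pow_zero, mul_one]
      · intro j _ hj; rw [hTe0 j hj, zero_mul]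
      · intro h; exact absurd (Finset.mem_univ _) h
    rw [hsum k] at h1
    rw [hsum 0] at h2
    have : ((n : ℕ) : E) * f (e k) = ((n : ℕ) : E) * f (e 0) := by rw [h1, h2]
    have hfk : f (e k) = f (e 0) := mul_left_cancel₀ hnE this
    exact f.injective hfk
  -- the sum of e is nonzero
  have hTzero : ∀ g : ZMod n → F,
      (∑ i : ZMod n, f (g i) * α ^ ((0 : ZMod n) * i).val) = f (∑ i : ZMod n, g i) := by
    intro g
    rw [map_sum]
    refine Finset.sum_congr rfl fun i _ => ?_
    rw [zero_mul, ZMod.val_zero, pow_zero, mul_one]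
  have hsumc' : (∑ i : ZMod n, c' i) = ∑ i : ZMod n, c i := by
    refine Fintype.sum_equiv (Equiv.neg (ZMod n)) _ _ ?_
    intro i; simp [hc'def]
  have hsume : (∑ k : ZMod n, e k) ≠ 0 := by
    have h0 := hTe 0
    rw [hTzero e, hTzero c, hTzero c', ← map_mul] at h0
    have : (∑ k : ZMod n, e k) = (∑ i : ZMod n, c i) * (∑ i : ZMod n, c' i) :=
      f.injective h0
    rw [this, hsumc']
    exact mul_ne_zero hodd hodd
  -- every coordinate of e is nonzero
  have he0 : e 0 ≠ 0 := by
    intro h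
    apply hsume
    refine Finset.sum_eq_zero fun k _ => ?_
    rw [hconst k, h]
  have hek : ∀ k : ZMod n, e k ≠ 0 := fun k => by rw [hconst k]; exact he0
  -- counting argument
  set s : Finset (ZMod n) := Finset.univ.filter (fun i => c i ≠ 0) with hsdef
  have hscard : s.card = d := by
    rw [hd]
    unfold minOddWeight
    rw [← hcd]
    rfl
  have hsub : (Finset.univ : Finset (ZMod n)) ⊆
      Finset.image (fun p : ZMod n × ZMod n => p.1 - p.2) (s ×ˢ s) := by
    intro k _
    have hk := hek k
    rw [hedef] at hk
    obtain ⟨i, _, hi⟩ := Finset.exists_ne_zero_of_sum_ne_zero hk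
    have hci : c i ≠ 0 := fun h => hi (by rw [h, zero_mul])
    have hcik : c (i - k) ≠ 0 := by
      intro h
      apply hi
      rw [hc'def]
      simp only [neg_sub]
      rw [h, mul_zero]
    refine Finset.mem_image.mpr ⟨⟨i, i - k⟩, ?_, ?_⟩
    · rw [Finset.mem_product]
      exact ⟨Finset.mem_filter.mpr ⟨Finset.mem_univ _, hci⟩,
        Finset.mem_filter.mpr ⟨Finset.mem_univ _, hcik⟩⟩
    · simp
  have himg : Finset.image (fun p : ZMod n × ZMod n => p.1 - p.2) (s ×ˢ s) ⊆
      insert (0 : ZMod n) (Finset.image (fun p : ZMod n × ZMod n => p.1 - p.2) s.offDiag) := by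
    intro x hx
    obtain ⟨p, hp, hpx⟩ := Finset.mem_image.mp hx
    rw [Finset.mem_product] at hp
    by_cases hpd : p.1 = p.2
    · refine Finset.mem_insert.mpr (Or.inl ?_)
      rw [← hpx, hpd, sub_self]
    · refine Finset.mem_insert.mpr (Or.inr ?_)
      exact Finset.mem_image.mpr ⟨p, Finset.mem_offDiag.mpr ⟨hp.1, hp.2, hpd⟩, hpx⟩
  have hn1 : n ≤ 1 + (d * d - d) := by
    calc n = (Finset.univ : Finset (ZMod n)).card := by rw [Finset.card_univ, ZMod.card]
    _ ≤ (Finset.image (fun p : ZMod n × ZMod n => p.1 - p.2) (s ×ˢ s)).card :=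
        Finset.card_le_card hsub
    _ ≤ (insert (0 : ZMod n)
          (Finset.image (fun p : ZMod n × ZMod n => p.1 - p.2) s.offDiag)).card :=
        Finset.card_le_card himg
    _ ≤ 1 + (Finset.image (fun p : ZMod n × ZMod n => p.1 - p.2) s.offDiag).card := by
        rw [add_comm]; exact Finset.card_insert_le _ _
    _ ≤ 1 + s.offDiag.card := by
        exact Nat.add_le_add_left (Finset.card_image_le) 1
    _ = 1 + (d * d - d) := by rw [Finset.offDiag_card, hscard]
  clear_value d
  have hfin : d * d - d + 1 = 1 + (d * d - d) := Nat.add_comm _ _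
  rw [pow_two, hfin]
  exact hn1
end

section
/- Let {S₀, S₁} be a splitting of n over F_{q²} with even-like duadic codes Cᵢ and odd-like duadic codes Dᵢ. Then the Hermitian dual satisfies Cᵢ^⊥h = Dᵢ if and only if -qSᵢ ≡ S_{(i+1 mod 2)} (mod n) for i = 0,1. -/
/-- The Hermitian dual of a code `C ⊆ F_{q²}^n`, with respect to the Hermitian inner
product `⟨u,v⟩ = ∑ᵢ uᵢ vᵢ^q`. -/
def hermDual (n q : ℕ) [NeZero n] {F : Type*} [Field F] (C : Set (ZMod n → F)) :
    Set (ZMod n → F) :=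
  {u | ∀ c ∈ C, ∑ i : ZMod n, u i * (c i) ^ q = 0}

open Finset

namespace CyclicCode

theorem mul_mem_iff_of_image_eq {M : Type*} [Monoid M] {a : M} (ha : IsUnit a) {T : Set M}
    (hT : (fun x => a * x) '' T = T) (x : M) : a * x ∈ T ↔ x ∈ T := by
  conv_lhs => rw [← hT]
  exact ha.mul_right_injective.mem_set_image

theorem image_mul_union_zero {M : Type*} [MulZeroClass M] {a : M} {T : Set M}
    (hT : (fun x => a * x) '' T = T) : (fun x => a * x) '' (T ∪ {0}) = T ∪ {0} := by
  rw [Set.image_union, hT, Set.image_singleton, mul_zero]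

theorem image_mul_image_mul {M : Type*} [CommSemigroup M] {a b : M} {T : Set M}
    (hT : (fun x => a * x) '' T = T) :
    (fun x => a * x) '' ((fun x => b * x) '' T) = (fun x => b * x) '' T := by
  rw [Set.image_image]
  nth_rewrite 2 [← hT]
  rw [Set.image_image]
  simp_rw [mul_left_comm a b]

theorem compl_union_zero_eq {M : Type*} [Zero M] {S₀ S₁ : Set M} (hdisj : S₀ ∩ S₁ = ∅)
    (hunion : S₀ ∪ S₁ = {x | x ≠ 0}) : (S₀ ∪ {0})ᶜ = S₁ := by
  ext x
  have h₀ := Set.ext_iff.1 hdisj x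
  have h₁ := Set.ext_iff.1 hunion x
  simp only [Set.mem_inter_iff, Set.mem_union, Set.mem_ofPred_eq] at h₀ h₁
  simp only [Set.mem_compl_iff, Set.mem_union, Set.mem_singleton_iff]
  tauto

variable {n : ℕ} [NeZero n] {E : Type*} [Field E]

theorem exists_ringHom_eq_pow {q : ℕ} (hq : IsPrimePow q) (hq0 : (q : E) = 0) :
    ∃ φ : E →+* E, ∀ x, φ x = x ^ q := by
  obtain ⟨p, k, hp, -, rfl⟩ := hq
  have : Fact p.Prime := ⟨hp.nat_prime⟩
  have : CharP E p := (CharP.charP_iff_prime_eq_zero hp.nat_prime).2 <|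
    pow_eq_zero_iff'.1 (by exact_mod_cast hq0) |>.1
  exact ⟨iterateFrobenius E p k, fun x => iterateFrobenius_def ..⟩

open Polynomial in
theorem exists_eq_of_pow_card_eq {F : Type*} [Field F] [Fintype F] (f : F →+* E) {x : E}
    (hx : x ^ Fintype.card F = x) : ∃ a, f a = x := by
  set P : F[X] := X ^ Fintype.card F - X
  have hdeg : P.natDegree = Fintype.card F :=
    FiniteField.X_pow_card_sub_X_natDegree_eq F Fintype.one_lt_card
  have hmonic : P.Monic :=
    monic_X_pow_sub (by rw [degree_X]; exact_mod_cast Fintype.one_lt_card)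
  have hroots := hmonic.roots_map_of_card_eq_natDegree f
    (by rw [FiniteField.roots_X_pow_card_sub_X, hdeg]; rfl)
  have hxroot : x ∈ (P.map f).roots := by
    rw [mem_roots (hmonic.map f).ne_zero]
    simp [P, hx]
  rw [← hroots, FiniteField.roots_X_pow_card_sub_X] at hxroot
  simpa using hxroot

def dft (ψ : AddChar (ZMod n) E) (v : ZMod n → E) (j : ZMod n) : E :=
  ∑ i, v i * ψ (j * i)

section Fourier

variable (ψ : AddChar (ZMod n) E)

theorem dft_comp_neg (v : ZMod n → E) (j : ZMod n) :
    dft ψ (fun i => v (-i)) j = dft ψ v (-j) :=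
  Fintype.sum_equiv (Equiv.neg _) _ _ fun i => by simp

theorem dft_comp_add_right (v : ZMod n → E) (s j : ZMod n) :
    dft ψ (fun i => v (i + s)) j = ψ (-(j * s)) * dft ψ v j := by
  rw [dft, dft, mul_sum]
  refine Fintype.sum_equiv (Equiv.addRight s) _ _ fun i => ?_
  rw [Equiv.coe_addRight, mul_left_comm, ← AddChar.map_add_eq_mul]
  congr 2
  ring

@[simp]
theorem dft_zero (j : ZMod n) : dft ψ 0 j = 0 := by
  simp [dft]

theorem dft_comp_mul_left {a : ZMod n} (ha : IsUnit a) (v : ZMod n → E) (j : ZMod n) :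
    dft ψ (fun i => v (a * i)) (a * j) = dft ψ v j := by
  refine Fintype.sum_equiv ha.unit.mulLeft _ _ fun i => ?_
  simp [mul_assoc, mul_left_comm]

theorem map_dft {q : ℕ} (φ : E →+* E) (hφ : ∀ x, φ x = x ^ q) (v : ZMod n → E) (j : ZMod n) :
    φ (dft ψ v j) = dft ψ (fun i => φ (v i)) (q * j) := by
  simp only [dft, map_sum, map_mul, hφ (ψ _), ← AddChar.map_nsmul_eq_pow, nsmul_eq_mul, mul_assoc]

theorem dft_dft (hψ : ψ.IsPrimitive) (v : ZMod n → E) (j : ZMod n) :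
    dft ψ (dft ψ v) j = n * v (-j) := by
  classical
  have horth : ∀ m, ∑ i, ψ (i * (m + j)) = if m = -j then (n : E) else 0 := by
    intro m
    rw [AddChar.sum_mulShift _ hψ, ZMod.card]
    simp [add_eq_zero_iff_eq_neg]
  calc dft ψ (dft ψ v) j = ∑ m, v m * ∑ i, ψ (i * (m + j)) := by
        simp only [dft, sum_mul, mul_sum]
        rw [sum_comm]
        refine sum_congr rfl fun m _ => sum_congr rfl fun i _ => ?_
        rw [mul_add, AddChar.map_add_eq_mul]
        ring_nf
    _ = n * v (-j) := by simp [horth, mul_comm]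

theorem eq_zero_of_dft_eq_zero (hψ : ψ.IsPrimitive) (hn : (n : E) ≠ 0) {v : ZMod n → E}
    (hv : ∀ j, dft ψ v j = 0) (i : ZMod n) : v i = 0 := by
  have h := dft_dft ψ hψ v (-i)
  rw [show dft ψ v = 0 from funext hv, neg_neg, dft_zero] at h
  simpa [hn] using h

theorem dft_sum_mul_pow_add {q : ℕ} (φ : E →+* E) (hφ : ∀ x, φ x = x ^ q)
    (u c : ZMod n → E) (k : ZMod n) :
    dft ψ (fun s => ∑ i, u i * c (i + s) ^ q) (q * k) = dft ψ u (-(q * k)) * dft ψ c k ^ q := by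
  calc dft ψ (fun s => ∑ i, u i * c (i + s) ^ q) (q * k)
      = ∑ i, u i * dft ψ (fun s => c (i + s) ^ q) (q * k) := by
        simp only [dft, sum_mul, mul_sum, mul_assoc]
        exact Finset.sum_comm
    _ = ∑ i, u i * (ψ (-(q * k * i)) * dft ψ (fun m => c m ^ q) (q * k)) :=
        sum_congr rfl fun i _ => by simp_rw [add_comm i]; rw [← dft_comp_add_right]
    _ = dft ψ u (-(q * k)) * dft ψ (fun m => φ (c m)) (q * k) := by
        simp only [hφ, dft, sum_mul, neg_mul, mul_assoc]
    _ = dft ψ u (-(q * k)) * dft ψ c k ^ q := by rw [← map_dft ψ φ hφ, hφ]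

end Fourier

section Codes

variable {α : E}

def rootChar (hα : IsPrimitiveRoot α n) : AddChar (ZMod n) E := AddChar.zmodChar n hα.pow_eq_one

theorem rootChar_isPrimitive (hα : IsPrimitiveRoot α n) : (rootChar hα).IsPrimitive :=
  AddChar.zmodChar_primitive_of_primitive_root n hα

variable {F : Type*} [Field F] (f : F →+* E)

theorem mem_cyclicCode_iff (hα : IsPrimitiveRoot α n) {T : Set (ZMod n)} {c : ZMod n → F} :
    c ∈ cyclicCode n f α T ↔ ∀ j ∈ T, dft (rootChar hα) (fun i => f (c i)) j = 0 :=
  Iff.rfl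

theorem shift_mem_cyclicCode (hα : IsPrimitiveRoot α n) {T : Set (ZMod n)} {c : ZMod n → F}
    (hc : c ∈ cyclicCode n f α T) (s : ZMod n) : (fun i => c (i + s)) ∈ cyclicCode n f α T :=
  (mem_cyclicCode_iff f hα).2 fun j hj => by
    rw [dft_comp_add_right _ (fun i => f (c i)), (mem_cyclicCode_iff f hα).1 hc j hj, mul_zero]

theorem dft_map_sum_mul_pow_add (ψ : AddChar (ZMod n) E) {q : ℕ} (φ : E →+* E)
    (hφ : ∀ x, φ x = x ^ q) (u c : ZMod n → F) (k : ZMod n) :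
    dft ψ (fun s => f (∑ i, u i * c (i + s) ^ q)) (q * k)
      = dft ψ (fun i => f (u i)) (-(q * k)) * dft ψ (fun i => f (c i)) k ^ q := by
  simpa only [map_sum, map_mul, map_pow] using
    dft_sum_mul_pow_add ψ φ hφ (fun i => f (u i)) (fun i => f (c i)) k

theorem cyclicCode_subset_hermDual {q : ℕ} (hq : q ≠ 0) (φ : E →+* E) (hφ : ∀ x, φ x = x ^ q)
    (hqn : IsUnit (q : ZMod n)) (hα : IsPrimitiveRoot α n) {T : Set (ZMod n)} :
    cyclicCode n f α ((fun x => -(q : ZMod n) * x) '' Tᶜ) ⊆ hermDual n q (cyclicCode n f α T) := by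
  intro u hu c hc
  refine f.injective ?_
  -- the correlation `s ↦ ∑ i, u i * c (i + s) ^ q` has zero transform, so it vanishes at `s = 0`
  have := eq_zero_of_dft_eq_zero _ (rootChar_isPrimitive hα) hα.neZero'.out
    (v := fun s => f (∑ i, u i * c (i + s) ^ q)) (fun j => ?_) 0
  · simpa using this
  obtain ⟨k, rfl⟩ : ∃ k, j = q * k :=
    ⟨↑hqn.unit⁻¹ * j, by rw [← mul_assoc, hqn.mul_val_inv, one_mul]⟩
  rw [dft_map_sum_mul_pow_add f _ φ hφ]
  by_cases hk : k ∈ T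
  · rw [(mem_cyclicCode_iff f hα).1 hc k hk, zero_pow hq, mul_zero]
  · rw [(mem_cyclicCode_iff f hα).1 hu _ ⟨k, hk, neg_mul _ _⟩, zero_mul]

variable [Fintype F]

theorem exists_dft_eq (hα : IsPrimitiveRoot α n) (hQ : IsUnit (Fintype.card F : ZMod n))
    (w : ZMod n → E) (hw : ∀ j, w (Fintype.card F * j) = w j ^ Fintype.card F) :
    ∃ c : ZMod n → F, dft (rootChar hα) (fun i => f (c i)) = w := by
  set ψ := rootChar hα
  obtain ⟨φ, hφ⟩ := exists_ringHom_eq_pow (FiniteField.isPrimePow_card F)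
    (by rw [← map_natCast f, FiniteField.cast_card_eq_zero, map_zero])
  have hn : (n : E) ≠ 0 := hα.neZero'.out
  -- the inverse transform of `w`; the equivariance of `w` makes it fixed by `x ↦ x ^ |F|`
  set c' : ZMod n → E := fun i => (n : E)⁻¹ * dft ψ w (-i)
  have hfix : ∀ i, c' i ^ Fintype.card F = c' i := by
    intro i
    rw [← hφ, map_mul, map_inv₀, map_natCast, map_dft ψ φ hφ]
    simp only [hφ, ← hw]
    rw [dft_comp_mul_left ψ hQ]
  choose c hc using fun i => exists_eq_of_pow_card_eq f (hfix i)
  refine ⟨c, funext fun k => ?_⟩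
  calc dft ψ (fun i => f (c i)) k = (n : E)⁻¹ * dft ψ (fun i => dft ψ w (-i)) k := by
        simp only [hc, c']
        rw [dft, dft, mul_sum]
        simp only [mul_assoc]
    _ = w k := by
        rw [dft_comp_neg, dft_dft ψ (rootChar_isPrimitive hα), neg_neg, inv_mul_cancel_left₀ hn]

theorem exists_mem_cyclicCode_dft_ne_zero (hα : IsPrimitiveRoot α n)
    (hQ : IsUnit (Fintype.card F : ZMod n))
    {T : Set (ZMod n)} (hT : (fun x => (Fintype.card F : ZMod n) * x) '' T = T)
    {k : ZMod n} (hk : k ∉ T) :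
    ∃ c ∈ cyclicCode n f α T, dft (rootChar hα) (fun i => f (c i)) k ≠ 0 := by
  classical
  obtain ⟨c, hc⟩ := exists_dft_eq f hα hQ (fun j => if j ∈ T then 0 else 1) fun j => by
    rw [mul_mem_iff_of_image_eq hQ hT]
    split_ifs <;> simp [Fintype.card_ne_zero]
  exact ⟨c, (mem_cyclicCode_iff f hα).2 fun j hj => by simp [hc, hj], by simp [hc, hk]⟩

theorem cyclicCode_subset_cyclicCode_iff (hα : IsPrimitiveRoot α n)
    (hQ : IsUnit (Fintype.card F : ZMod n))
    {T T' : Set (ZMod n)} (hT : (fun x => (Fintype.card F : ZMod n) * x) '' T = T) :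
    cyclicCode n f α T ⊆ cyclicCode n f α T' ↔ T' ⊆ T := by
  refine ⟨fun h k hk => ?_, fun h c hc j hj => hc j (h hj)⟩
  by_contra hkT
  obtain ⟨c, hc, hck⟩ := exists_mem_cyclicCode_dft_ne_zero f hα hQ hT hkT
  exact hck (h hc k hk)

theorem cyclicCode_inj (hα : IsPrimitiveRoot α n)
    (hQ : IsUnit (Fintype.card F : ZMod n)) {T T' : Set (ZMod n)}
    (hT : (fun x => (Fintype.card F : ZMod n) * x) '' T = T)
    (hT' : (fun x => (Fintype.card F : ZMod n) * x) '' T' = T') :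
    cyclicCode n f α T = cyclicCode n f α T' ↔ T = T' := by
  rw [Set.Subset.antisymm_iff, Set.Subset.antisymm_iff,
    cyclicCode_subset_cyclicCode_iff f hα hQ hT, cyclicCode_subset_cyclicCode_iff f hα hQ hT',
    and_comm]

theorem hermDual_subset_cyclicCode {q : ℕ} (φ : E →+* E) (hφ : ∀ x, φ x = x ^ q)
    (hα : IsPrimitiveRoot α n) (hQ : IsUnit (Fintype.card F : ZMod n)) {T : Set (ZMod n)}
    (hT : (fun x => (Fintype.card F : ZMod n) * x) '' T = T) :
    hermDual n q (cyclicCode n f α T) ⊆ cyclicCode n f α ((fun x => -(q : ZMod n) * x) '' Tᶜ) := by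
  rintro u hu _ ⟨k, hk, rfl⟩
  obtain ⟨c, hc, hck⟩ := exists_mem_cyclicCode_dft_ne_zero f hα hQ hT hk
  have h := dft_map_sum_mul_pow_add f (rootChar hα) φ hφ u c k
  rw [show (fun s => f (∑ i, u i * c (i + s) ^ q)) = 0 from
    funext fun s => by rw [hu _ (shift_mem_cyclicCode f hα hc s), map_zero, Pi.zero_apply], dft_zero] at h
  show dft (rootChar hα) (fun i => f (u i)) (-(q : ZMod n) * k) = 0
  rw [neg_mul]
  exact (mul_eq_zero.1 h.symm).resolve_right (pow_ne_zero _ hck)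

theorem hermDual_cyclicCode {q : ℕ} (hq : IsPrimePow q) (hcard : Fintype.card F = q ^ 2)
    (hqn : IsUnit (q : ZMod n)) (hα : IsPrimitiveRoot α n) {T : Set (ZMod n)}
    (hT : (fun x => (q : ZMod n) ^ 2 * x) '' T = T) :
    hermDual n q (cyclicCode n f α T) = cyclicCode n f α ((fun x => -(q : ZMod n) * x) '' Tᶜ) := by
  have hQ : (Fintype.card F : ZMod n) = (q : ZMod n) ^ 2 := by rw [hcard, Nat.cast_pow]
  have hqF : (q : F) = 0 := pow_eq_zero_iff two_ne_zero |>.1 <| by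
    exact_mod_cast hcard ▸ FiniteField.cast_card_eq_zero F
  obtain ⟨φ, hφ⟩ := exists_ringHom_eq_pow hq (by rw [← map_natCast f, hqF, map_zero])
  exact (hermDual_subset_cyclicCode f φ hφ hα (hQ ▸ hqn.pow 2) (hQ ▸ hT)).antisymm
    (cyclicCode_subset_hermDual f hq.ne_zero φ hφ hqn hα)

end Codes

end CyclicCode

theorem stmt_17_general (n q : ℕ) [NeZero n] (hq : IsPrimePow q)
    {F E : Type*} [Field F] [Fintype F] [Field E]
    (hcard : Fintype.card F = q ^ 2) (hco : Nat.Coprime n q)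
    (f : F →+* E) (α : E) (hα : orderOf α = n)
    (S₀ S₁ : Set (ZMod n))
    (hdisj : S₀ ∩ S₁ = ∅)
    (hunion : S₀ ∪ S₁ = {x : ZMod n | x ≠ 0})
    (hc0 : (fun x => ((q : ZMod n)) ^ 2 * x) '' S₀ = S₀)
    (hc1 : (fun x => ((q : ZMod n)) ^ 2 * x) '' S₁ = S₁) :
    (hermDual n q (cyclicCode n f α (S₀ ∪ {0})) = cyclicCode n f α S₀ ∧
        hermDual n q (cyclicCode n f α (S₁ ∪ {0})) = cyclicCode n f α S₁) ↔
      ((fun x => -(q : ZMod n) * x) '' S₀ = S₁ ∧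
        (fun x => -(q : ZMod n) * x) '' S₁ = S₀) := by
  have hprim : IsPrimitiveRoot α n := hα ▸ IsPrimitiveRoot.orderOf α
  have hqn : IsUnit (q : ZMod n) := (ZMod.isUnit_iff_coprime q n).2 hco.symm
  have hQ : (Fintype.card F : ZMod n) = (q : ZMod n) ^ 2 := by rw [hcard, Nat.cast_pow]
  open CyclicCode in
  rw [hermDual_cyclicCode f hq hcard hqn hprim (image_mul_union_zero hc0),
    compl_union_zero_eq hdisj hunion,
    hermDual_cyclicCode f hq hcard hqn hprim (image_mul_union_zero hc1),
    compl_union_zero_eq (Set.inter_comm S₀ S₁ ▸ hdisj) (Set.union_comm S₀ S₁ ▸ hunion),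
    cyclicCode_inj f hprim (hQ ▸ hqn.pow 2) (hQ ▸ image_mul_image_mul hc1) (hQ ▸ hc0),
    cyclicCode_inj f hprim (hQ ▸ hqn.pow 2) (hQ ▸ image_mul_image_mul hc0) (hQ ▸ hc1)]
  exact and_comm

/-- Let `{S₀, S₁}` be a splitting of `n` over `F_{q²}` with even-like duadic codes `Cᵢ`
(defining set `Sᵢ ∪ {0}`) and odd-like duadic codes `Dᵢ` (defining set `Sᵢ`). Then
`Cᵢ^⊥h = Dᵢ` for `i = 0, 1` if and only if `-q·Sᵢ ≡ S_{i+1 mod 2} (mod n)` for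
`i = 0, 1`, i.e. `μ₋q` gives the splitting. -/
theorem stmt_17 (n q : ℕ) [NeZero n] (hn : Odd n) (hq : IsPrimePow q)
    {F E : Type*} [Field F] [Fintype F] [Field E]
    (hcard : Fintype.card F = q ^ 2) (hco : Nat.Coprime n q)
    (f : F →+* E) (α : E) (hα : orderOf α = n)
    (S₀ S₁ : Set (ZMod n)) (a : (ZMod n)ˣ)
    (hdisj : S₀ ∩ S₁ = ∅)
    (hunion : S₀ ∪ S₁ = {x : ZMod n | x ≠ 0})
    (hc0 : (fun x => ((q : ZMod n)) ^ 2 * x) '' S₀ = S₀)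
    (hc1 : (fun x => ((q : ZMod n)) ^ 2 * x) '' S₁ = S₁)
    (ha0 : (fun x => (a : ZMod n) * x) '' S₀ = S₁)
    (ha1 : (fun x => (a : ZMod n) * x) '' S₁ = S₀) :
    (hermDual n q (cyclicCode n f α (S₀ ∪ {0})) = cyclicCode n f α S₀ ∧
        hermDual n q (cyclicCode n f α (S₁ ∪ {0})) = cyclicCode n f α S₁) ↔
      ((fun x => -(q : ZMod n) * x) '' S₀ = S₁ ∧
        (fun x => -(q : ZMod n) * x) '' S₁ = S₀) :=
  stmt_17_general n q hq hcard hco f α hα S₀ S₁ hdisj hunion hc0 hc1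
end

section
/- Let n be odd with ord_n(q) odd. Then there exists a partition {S₀,S₁} of the nonzero residues modulo n into unions of q²-ary cyclotomic cosets such that both -S₀ ≡ S₁ and -qS₀ ≡ S₁ (mod n); i.e., μ₋₁ and μ₋q give the same splitting of n over F_{q²}. -/
/-- If `n` is odd with `ord_n(q)` odd, there is a partition `{S₀,S₁}` of the nonzero
residues mod `n` into unions of `q²`-ary cyclotomic cosets such that both `-S₀ = S₁`
and `-q·S₀ = S₁`: `μ₋₁` and `μ₋q` give the same splitting of `n` over `F_{q²}`. -/
theorem stmt_18 (n q : ℕ) (hn : Odd n) (hpos : 0 < n) (hq : IsPrimePow q)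
    (h : Nat.Coprime q n)
    (hodd : Odd (orderOf (ZMod.unitOfCoprime q h : (ZMod n)ˣ))) :
    ∃ S₀ S₁ : Set (ZMod n),
      S₀ ∩ S₁ = ∅ ∧ S₀ ∪ S₁ = {x : ZMod n | x ≠ 0} ∧
      (fun x => ((q : ZMod n)) ^ 2 * x) '' S₀ = S₀ ∧
      (fun x => ((q : ZMod n)) ^ 2 * x) '' S₁ = S₁ ∧
      (fun x => -x) '' S₀ = S₁ ∧
      (fun x => -(q : ZMod n) * x) '' S₀ = S₁ := by
  classical
  haveI : NeZero n := ⟨hpos.ne'⟩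
  set u : (ZMod n)ˣ := ZMod.unitOfCoprime q h with hu
  set N := orderOf u with hN
  have hNpos : 0 < N := orderOf_pos u
  obtain ⟨N', hN' ⟩ : ∃ N', N = N' + 1 := ⟨N - 1, by omega⟩
  have hqcast : ((u : (ZMod n)ˣ) : ZMod n) = (q : ZMod n) := ZMod.coe_unitOfCoprime q h
  have hqN : (q : ZMod n) ^ N = 1 := by
    have h1 : (u ^ N : (ZMod n)ˣ) = 1 := pow_orderOf_eq_one u
    have := congrArg (fun v : (ZMod n)ˣ => (v : ZMod n)) h1
    simpa [hqcast] using this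
  have hqunit : IsUnit (q : ZMod n) := ⟨u, hqcast⟩
  -- Key number-theoretic lemma
  have key : ∀ (k : ℕ) (x : ZMod n), (q : ZMod n) ^ k * x = -x → x = 0 := by
    intro k x hx
    have hco : Nat.Coprime (q ^ k + 1) n := by
      by_contra hc
      obtain ⟨p, hp, hp1, hp2⟩ := Nat.Prime.not_coprime_iff_dvd.mp hc
      haveI : Fact p.Prime := ⟨hp⟩
      have hpodd : p ≠ 2 := by
        rintro rfl
        exact (Nat.not_even_iff_odd.mpr hn) ((even_iff_two_dvd).mpr hp2)
      have ha : (q : ZMod p) ^ k = -1 := by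
        have h0 : ((q ^ k + 1 : ℕ) : ZMod p) = 0 :=
          (ZMod.natCast_eq_zero_iff _ _).mpr hp1
        push_cast at h0
        linear_combination h0
      have ht2k : orderOf ((q : ZMod p)) ∣ 2 * k := by
        apply orderOf_dvd_of_pow_eq_one
        rw [mul_comm, pow_mul, ha]
        ring
      have htN : orderOf ((q : ZMod p)) ∣ N := by
        apply orderOf_dvd_of_pow_eq_one
        have hmap := congrArg (ZMod.castHom hp2 (ZMod p)) hqN
        rw [map_pow, map_natCast, map_one] at hmap
        exact hmap
      have htodd : Odd (orderOf ((q : ZMod p))) := by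
        obtain ⟨c, hc'⟩ := htN
        rw [hc'] at hodd
        exact (Nat.odd_mul.mp hodd).1
      have hcop2 : Nat.Coprime (orderOf ((q : ZMod p))) 2 := by
        rw [Nat.odd_iff] at htodd
        rw [Nat.coprime_comm, Nat.prime_two.coprime_iff_not_dvd, Nat.dvd_iff_mod_eq_zero]
        omega
      have htk : orderOf ((q : ZMod p)) ∣ k :=
        (Nat.Coprime.dvd_of_dvd_mul_left (by exact hcop2) ht2k)
      have hq1 : (q : ZMod p) ^ k = 1 := orderOf_dvd_iff_pow_eq_one.mp htk
      rw [ha] at hq1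
      have h2 : ((2 : ℕ) : ZMod p) = 0 := by push_cast; linear_combination -hq1
      have hdp := (ZMod.natCast_eq_zero_iff 2 p).mp h2
      exact hpodd ((Nat.prime_dvd_prime_iff_eq hp Nat.prime_two).mp hdp)
    have hunit : IsUnit ((q : ZMod n) ^ k + 1) := by
      have := (ZMod.isUnit_iff_coprime (q ^ k + 1) n).mpr hco
      push_cast at this
      exact this
    have h0 : ((q : ZMod n) ^ k + 1) * x = 0 := by
      rw [add_mul, one_mul, hx]; ring
    exact (hunit.mul_right_eq_zero).mp h0
  -- Setoid: cyclotomic coset equivalence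
  let r : ZMod n → ZMod n → Prop := fun x y => ∃ k : ℕ, (q : ZMod n) ^ k * x = y
  have hqmulN : ∀ (m : ℕ) (x : ZMod n), (q : ZMod n) ^ (m * N) * x = x := by
    intro m x
    rw [mul_comm m N, pow_mul, hqN, one_pow, one_mul]
  have hrefl : ∀ x, r x x := fun x => ⟨0, by simp⟩
  have hsymm : ∀ {x y}, r x y → r y x := by
    rintro x y ⟨k, rfl⟩
    refine ⟨k * N', ?_⟩
    rw [← mul_assoc, ← pow_add]
    have : k * N' + k = k * N := by rw [hN']; ring
    rw [this, hqmulN]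
  have htrans : ∀ {x y z}, r x y → r y z → r x z := by
    rintro x y z ⟨k, rfl⟩ ⟨l, rfl⟩
    exact ⟨l + k, by rw [pow_add, mul_assoc]⟩
  let s : Setoid (ZMod n) :=
    { r := r
      iseqv :=
        { refl := hrefl
          symm := fun {x y} hxy => hsymm hxy
          trans := fun {x y z} h1 h2 => htrans h1 h2 } }
  let mk : ZMod n → Quotient s := Quotient.mk s
  have hmk_pow : ∀ (j : ℕ) (x : ZMod n), mk ((q : ZMod n) ^ j * x) = mk x := by
    intro j x
    have hrx : r x ((q : ZMod n) ^ j * x) := ⟨j, rfl⟩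
    exact (Quotient.sound hrx).symm
  have hmk_mul : ∀ (x : ZMod n), mk ((q : ZMod n) * x) = mk x := by
    intro x
    have := hmk_pow 1 x
    rwa [pow_one] at this
  have hnegr : ∀ {x y : ZMod n}, r x y → r (-x) (-y) := by
    rintro x y ⟨k, rfl⟩
    exact ⟨k, by ring⟩
  let ν : Quotient s → Quotient s := Quotient.map (fun x => -x) (fun x y hxy => hnegr hxy)
  have hνmk : ∀ x : ZMod n, ν (mk x) = mk (-x) := fun x => rfl
  have hνν : ∀ c, ν (ν c) = c := by
    intro c
    induction c using Quotient.ind with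
    | _ x => show mk (- - x) = mk x; rw [neg_neg]
  have hνne : ∀ x : ZMod n, x ≠ 0 → ν (mk x) ≠ mk x := by
    intro x hx heq
    obtain ⟨k, hk⟩ := Quotient.exact heq
    have hk' : (q : ZMod n) ^ k * (-x) = x := hk
    apply hx
    apply key k x
    linear_combination -hk'
  -- Pairing setoid on the quotient
  let s2 : Setoid (Quotient s) := ⟨fun c d => d = c ∨ d = ν c, by
    constructor
    · intro c; exact Or.inl rfl
    · intro c d hd
      rcases hd with hd | hd
      · exact Or.inl hd.symm
      · exact Or.inr (by rw [hd, hνν])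
    · intro c d e hd he
      rcases hd with hd | hd <;> rcases he with he | he
      · exact Or.inl (he.trans hd)
      · exact Or.inr (by rw [he, hd])
      · exact Or.inr (he.trans hd)
      · exact Or.inl (by rw [he, hd, hνν])⟩
  let A : Set (Quotient s) := {c | (Quotient.mk s2 c).out = c}
  have hout : ∀ c, c = (Quotient.mk s2 c).out ∨ c = ν ((Quotient.mk s2 c).out) := by
    intro c
    have : Quotient.mk s2 ((Quotient.mk s2 c).out) = Quotient.mk s2 c := Quotient.out_eq _
    exact Quotient.exact this
  have hcovers : ∀ c, c ∈ A ∨ ν c ∈ A := by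
    intro c
    rcases hout c with hc | hc
    · exact Or.inl hc.symm
    · right
      have he : ν c = (Quotient.mk s2 c).out := by
        conv_lhs => rw [hc, hνν]
      have hmkeq : Quotient.mk s2 (ν c) = Quotient.mk s2 c :=
        Quotient.sound (Or.inr (hνν c).symm)
      show (Quotient.mk s2 (ν c)).out = ν c
      rw [hmkeq]
      exact he.symm
  have hnotboth : ∀ c, ν c ≠ c → ¬(c ∈ A ∧ ν c ∈ A) := by
    rintro c hne ⟨h1, h2⟩
    have hmkeq : Quotient.mk s2 (ν c) = Quotient.mk s2 c :=
      Quotient.sound (Or.inr (hνν c).symm)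
    apply hne
    have : (Quotient.mk s2 (ν c)).out = ν c := h2
    rw [hmkeq, h1] at this
    exact this.symm
  -- the splitting
  refine ⟨{x | x ≠ 0 ∧ mk x ∈ A}, {x | x ≠ 0 ∧ mk x ∉ A}, ?_, ?_, ?_, ?_, ?_, ?_⟩
  · ext x; simp only [Set.mem_inter_iff, Set.mem_setOf_eq, Set.mem_empty_iff_false]; tauto
  · ext x; simp only [Set.mem_union, Set.mem_setOf_eq]; tauto
  · ext x
    simp only [Set.mem_image, Set.mem_setOf_eq]
    constructor
    · rintro ⟨y, ⟨hy0, hyA⟩, rfl⟩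
      refine ⟨?_, ?_⟩
      · exact fun h0 => hy0 (((hqunit.pow 2).mul_right_eq_zero).mp h0)
      · rwa [hmk_pow]
    · rintro ⟨hx0, hxA⟩
      refine ⟨(q : ZMod n) ^ (2 * N') * x, ⟨?_, ?_⟩, ?_⟩
      · exact fun h0 => hx0 (((hqunit.pow _).mul_right_eq_zero).mp h0)
      · rwa [hmk_pow]
      · rw [← mul_assoc, ← pow_add]
        have : 2 + 2 * N' = 2 * N := by rw [hN']; ring
        rw [this, hqmulN]
  · ext x
    simp only [Set.mem_image, Set.mem_setOf_eq]
    constructor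
    · rintro ⟨y, ⟨hy0, hyA⟩, rfl⟩
      refine ⟨?_, ?_⟩
      · exact fun h0 => hy0 (((hqunit.pow 2).mul_right_eq_zero).mp h0)
      · rwa [hmk_pow]
    · rintro ⟨hx0, hxA⟩
      refine ⟨(q : ZMod n) ^ (2 * N') * x, ⟨?_, ?_⟩, ?_⟩
      · exact fun h0 => hx0 (((hqunit.pow _).mul_right_eq_zero).mp h0)
      · rwa [hmk_pow]
      · rw [← mul_assoc, ← pow_add]
        have : 2 + 2 * N' = 2 * N := by rw [hN']; ring
        rw [this, hqmulN]
  · ext x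
    simp only [Set.mem_image, Set.mem_setOf_eq]
    constructor
    · rintro ⟨y, ⟨hy0, hyA⟩, rfl⟩
      refine ⟨neg_ne_zero.mpr hy0, ?_⟩
      intro hA
      exact hnotboth (mk y) (hνne y hy0) ⟨hyA, hA⟩
    · rintro ⟨hx0, hxA⟩
      refine ⟨-x, ⟨neg_ne_zero.mpr hx0, ?_⟩, by rw [neg_neg]⟩
      rcases hcovers (mk x) with hA | hA
      · exact absurd hA hxA
      · exact hA
  · ext x
    simp only [Set.mem_image, Set.mem_setOf_eq]
    constructor
    · rintro ⟨y, ⟨hy0, hyA⟩, rfl⟩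
      have hqy0 : (q : ZMod n) * y ≠ 0 :=
        fun h0 => hy0 ((hqunit.mul_right_eq_zero).mp h0)
      have heq : -(q : ZMod n) * y = -((q : ZMod n) * y) := by ring
      rw [heq]
      refine ⟨neg_ne_zero.mpr hqy0, ?_⟩
      intro hA
      have hmkq : mk (-((q : ZMod n) * y)) = ν (mk y) := by
        rw [hνmk, ← hmk_mul (-y)]
        congr 1
        ring
      rw [hmkq] at hA
      exact hnotboth (mk y) (hνne y hy0) ⟨hyA, hA⟩
    · rintro ⟨hx0, hxA⟩
      refine ⟨(q : ZMod n) ^ N' * (-x), ⟨?_, ?_⟩, ?_⟩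
      · have : (-x : ZMod n) ≠ 0 := neg_ne_zero.mpr hx0
        exact fun h0 => this (((hqunit.pow _).mul_right_eq_zero).mp h0)
      · rw [hmk_pow, ← hνmk]
        rcases hcovers (mk x) with hA | hA
        · exact absurd hA hxA
        · exact hA
      · have : -(q : ZMod n) * ((q : ZMod n) ^ N' * (-x)) = (q : ZMod n) ^ (N' + 1) * x := by
          ring
        rw [this, ← hN']
        have := hqmulN 1 x
        rwa [one_mul] at this
end
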